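/- arXiv:2603.12536 — 10 statements merged into one kernel-verified Lean document; each statement's English description precedes it below -/
import Mathlib

section
/- Under the heterogeneous elasticity model with the stated integrability, for every real φ ≠ 0 and every x > 0, the map t ↦ log E[exp(φ·a + φ·ε·t)] is differentiable at t = log x and the power-mean elasticity satisfies ε_φ(x) = E[Y(x)^φ · ε] / E[Y(x)^φ]. Moreover the geometric-mean elasticity is constant: ε_0(x) = E[ε] for all x > 0, and for φ = 1 one has ε_1(x) = E[Y(x)·ε]/E[Y(x)]. -/
open MeasureTheory Real

/-!
Write `Z(t) = E[exp (f + g t)]`. A moment bound `E[(1 + g²) exp (f + g t)] < ∞` for every `t`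
dominates both `exp (f + g s)` and its `s`-derivative `g exp (f + g s)` uniformly for `s` near
`t`, so `Z` can be differentiated under the integral sign, and `Z > 0` gives
`(log Z)' = E[g exp (f + g t)] / Z(t)`. With `f = φ a`, `g = φ ε` and `Y(x)^φ = exp (φ a + φ ε log x)`
this is `φ` times the power-mean elasticity. The geometric mean is `exp (E[a] + E[ε] log x)`,
whose log is affine in `log x` with slope `E[ε]`.
-/

section

variable {Ω : Type*} [MeasurableSpace Ω] {μ : Measure Ω}

theorem exp_add_mul_le_of_abs_sub_lt {c s t t₀ : ℝ} (h : |t - t₀| < 1) :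
    exp (c + s * t) ≤ exp (c + s * (t₀ - 1)) + exp (c + s * (t₀ + 1)) := by
  obtain ⟨h₁, h₂⟩ := abs_lt.mp h
  rcases le_or_gt 0 s with hs | hs
  · have : s * t ≤ s * (t₀ + 1) := by nlinarith
    exact (exp_le_exp.mpr (by linarith)).trans (le_add_of_nonneg_left (exp_pos _).le)
  · have : s * t ≤ s * (t₀ - 1) := by nlinarith
    exact (exp_le_exp.mpr (by linarith)).trans (le_add_of_nonneg_right (exp_pos _).le)

theorem abs_le_one_add_sq {R : Type*} [CommRing R] [LinearOrder R] [IsStrictOrderedRing R] (y : R) :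
    |y| ≤ 1 + y ^ 2 := by
  nlinarith [abs_nonneg y, sq_abs y, sq_nonneg (|y| - 1)]

theorem MeasureTheory.Integrable.of_one_add_sq_mul {g h : Ω → ℝ}
    (hh : AEStronglyMeasurable h μ) (hI : Integrable (fun ω => (1 + g ω ^ 2) * h ω) μ) :
    Integrable h μ := by
  refine hI.mono hh (Filter.Eventually.of_forall fun ω => ?_)
  rw [norm_mul, norm_of_nonneg (by positivity : (0 : ℝ) ≤ 1 + g ω ^ 2)]
  nlinarith [norm_nonneg (h ω), sq_nonneg (g ω)]

theorem MeasureTheory.Integrable.one_add_const_mul_sq_mul {g h : Ω → ℝ} (c : ℝ)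
    (hg : AEStronglyMeasurable g μ) (hh : AEStronglyMeasurable h μ)
    (hI : Integrable (fun ω => (1 + g ω ^ 2) * h ω) μ) :
    Integrable (fun ω => (1 + (c * g ω) ^ 2) * h ω) μ := by
  refine (hI.const_mul (1 + c ^ 2)).mono (by fun_prop) (Filter.Eventually.of_forall fun ω => ?_)
  simp only [norm_mul, norm_of_nonneg (by positivity : (0 : ℝ) ≤ 1 + (c * g ω) ^ 2),
    norm_of_nonneg (by positivity : (0 : ℝ) ≤ 1 + c ^ 2),
    norm_of_nonneg (by positivity : (0 : ℝ) ≤ 1 + g ω ^ 2)]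
  have : 1 + (c * g ω) ^ 2 ≤ (1 + c ^ 2) * (1 + g ω ^ 2) := by nlinarith [sq_nonneg (c * g ω)]
  nlinarith [norm_nonneg (h ω)]

variable {f g : Ω → ℝ}

theorem aestronglyMeasurable_exp_add_mul (hf : AEStronglyMeasurable f μ)
    (hg : AEStronglyMeasurable g μ) (t : ℝ) :
    AEStronglyMeasurable (fun ω => exp (f ω + g ω * t)) μ :=
  continuous_exp.comp_aestronglyMeasurable (hf.add (hg.mul_const t))

theorem hasDerivAt_integral_exp_add_mul (hf : AEStronglyMeasurable f μ)
    (hg : AEStronglyMeasurable g μ)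
    (hI : ∀ t, Integrable (fun ω => (1 + g ω ^ 2) * exp (f ω + g ω * t)) μ) (t₀ : ℝ) :
    HasDerivAt (fun t => ∫ ω, exp (f ω + g ω * t) ∂μ)
      (∫ ω, exp (f ω + g ω * t₀) * g ω ∂μ) t₀ := by
  have h_bound : ∀ ω, ∀ t ∈ Metric.ball t₀ 1, ‖exp (f ω + g ω * t) * g ω‖ ≤
      (1 + g ω ^ 2) * (exp (f ω + g ω * (t₀ - 1)) + exp (f ω + g ω * (t₀ + 1))) := by
    intro ω t ht
    rw [norm_eq_abs, abs_mul, abs_of_pos (exp_pos _), mul_comm]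
    exact mul_le_mul (abs_le_one_add_sq _)
      (exp_add_mul_le_of_abs_sub_lt (by rwa [Metric.mem_ball, dist_eq] at ht))
      (exp_pos _).le (by positivity)
  have bound_integrable : Integrable (fun ω => (1 + g ω ^ 2) *
      (exp (f ω + g ω * (t₀ - 1)) + exp (f ω + g ω * (t₀ + 1)))) μ :=
    ((hI (t₀ - 1)).add (hI (t₀ + 1))).congr
      (Filter.Eventually.of_forall fun ω => (mul_add _ _ _).symm)
  refine (hasDerivAt_integral_of_dominated_loc_of_deriv_le (Metric.ball_mem_nhds t₀ one_pos)
    (Filter.Eventually.of_forall (aestronglyMeasurable_exp_add_mul hf hg))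
    ((hI t₀).of_one_add_sq_mul (aestronglyMeasurable_exp_add_mul hf hg t₀))
    ((aestronglyMeasurable_exp_add_mul hf hg t₀).mul hg)
    (Filter.Eventually.of_forall h_bound) bound_integrable
    (Filter.Eventually.of_forall fun ω t _ => ?_)).2
  simpa [mul_comm] using (((hasDerivAt_id t).const_mul (g ω)).const_add (f ω)).exp

theorem hasDerivAt_log_integral_exp_add_mul [NeZero μ] (hf : AEStronglyMeasurable f μ)
    (hg : AEStronglyMeasurable g μ)
    (hI : ∀ t, Integrable (fun ω => (1 + g ω ^ 2) * exp (f ω + g ω * t)) μ) (t₀ : ℝ) :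
    HasDerivAt (fun t => log (∫ ω, exp (f ω + g ω * t) ∂μ))
      ((∫ ω, exp (f ω + g ω * t₀) * g ω ∂μ) / ∫ ω, exp (f ω + g ω * t₀) ∂μ) t₀ :=
  (hasDerivAt_integral_exp_add_mul hf hg hI t₀).log (integral_exp_pos
    ((hI t₀).of_one_add_sq_mul (aestronglyMeasurable_exp_add_mul hf hg t₀))).ne'

end

theorem stmt0_general
    {Ω : Type*} [MeasurableSpace Ω] (μ : Measure Ω) [IsProbabilityMeasure μ]
    (a e : Ω → ℝ)
    (hInta : Integrable a μ) (hInte : Integrable e μ)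
    (φ : ℝ)
    (hMom : ∀ t : ℝ, Integrable (fun ω => (1 + e ω ^ 2) * Real.exp (φ * a ω + t * φ * e ω)) μ)
    (hMom1 : ∀ t : ℝ, Integrable (fun ω => (1 + e ω ^ 2) * Real.exp (1 * a ω + t * 1 * e ω)) μ)
    (x : ℝ) :
    HasDerivAt (fun t : ℝ => Real.log (∫ ω, Real.exp (φ * a ω + φ * e ω * t) ∂μ))
      (φ * ((∫ ω, Real.exp (a ω + e ω * Real.log x) ^ φ * e ω ∂μ) /
            (∫ ω, Real.exp (a ω + e ω * Real.log x) ^ φ ∂μ))) (Real.log x)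
    ∧ (∀ x' : ℝ, 0 < x' →
        deriv (fun t : ℝ => Real.log (Real.exp (∫ ω, (a ω + e ω * t) ∂μ))) (Real.log x')
          = ∫ ω, e ω ∂μ)
    ∧ HasDerivAt (fun t : ℝ => Real.log (∫ ω, Real.exp (a ω + e ω * t) ∂μ))
      ((∫ ω, Real.exp (a ω + e ω * Real.log x) * e ω ∂μ) /
       (∫ ω, Real.exp (a ω + e ω * Real.log x) ∂μ)) (Real.log x) := by
  have ha := hInta.aestronglyMeasurable
  have he := hInte.aestronglyMeasurable
  have hpow : ∀ ω t, exp (a ω + e ω * t) ^ φ = exp (φ * a ω + φ * e ω * t) := fun ω t => by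
    rw [← exp_mul]; ring_nf
  refine ⟨?_, fun x' _ => ?_, ?_⟩
  · have hI : ∀ t, Integrable (fun ω => (1 + (φ * e ω) ^ 2) * exp (φ * a ω + φ * e ω * t)) μ :=
      fun t => ((hMom t).one_add_const_mul_sq_mul φ he (by fun_prop)).congr
        (Filter.Eventually.of_forall fun ω => by ring_nf)
    convert hasDerivAt_log_integral_exp_add_mul (ha.const_mul φ) (he.const_mul φ) hI (log x)
      using 1
    simp_rw [hpow, mul_div_assoc', ← integral_const_mul]
    congr 2 with ω
    ring
  · have h_affine : (fun t => log (exp (∫ ω, (a ω + e ω * t) ∂μ)))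
        = fun t => (∫ ω, a ω ∂μ) + (∫ ω, e ω ∂μ) * t := by
      funext t
      rw [log_exp, integral_add hInta (hInte.mul_const t), integral_mul_const]
    rw [h_affine]
    simp
  · exact hasDerivAt_log_integral_exp_add_mul ha he
      (fun t => (hMom1 t).congr (Filter.Eventually.of_forall fun ω => by ring_nf)) (log x)

/-- In the heterogeneous elasticity model `Y(x)(ω) = exp (a ω + ε ω * log x)`,
for `φ ≠ 0` and `x > 0` the map `t ↦ log E[exp (φ a + φ ε t)]` is differentiable at `t = log x`
with derivative `φ · E[Y(x)^φ ε] / E[Y(x)^φ]` (so the power-mean elasticity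
`ε_φ(x) = (1/φ) · d/d(log x) log E[Y(x)^φ]` equals `E[Y(x)^φ ε]/E[Y(x)^φ]`);
the geometric-mean elasticity is constant equal to `E[ε]`; and for `φ = 1` the map
`t ↦ log E[exp (a + ε t)]` has derivative `E[Y(x) ε]/E[Y(x)]` at `t = log x`. -/
theorem stmt0
    {Ω : Type*} [MeasurableSpace Ω] (μ : Measure Ω) [IsProbabilityMeasure μ]
    (a e : Ω → ℝ) (ha : Measurable a) (he : Measurable e)
    (hInta : Integrable a μ) (hInte : Integrable e μ)
    (φ : ℝ) (hφ : φ ≠ 0)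
    (hMom : ∀ t : ℝ, Integrable (fun ω => (1 + e ω ^ 2) * Real.exp (φ * a ω + t * φ * e ω)) μ)
    (hMom1 : ∀ t : ℝ, Integrable (fun ω => (1 + e ω ^ 2) * Real.exp (1 * a ω + t * 1 * e ω)) μ)
    (x : ℝ) (hx : 0 < x) :
    HasDerivAt (fun t : ℝ => Real.log (∫ ω, Real.exp (φ * a ω + φ * e ω * t) ∂μ))
      (φ * ((∫ ω, Real.exp (a ω + e ω * Real.log x) ^ φ * e ω ∂μ) /
            (∫ ω, Real.exp (a ω + e ω * Real.log x) ^ φ ∂μ))) (Real.log x)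
    ∧ (∀ x' : ℝ, 0 < x' →
        deriv (fun t : ℝ => Real.log (Real.exp (∫ ω, (a ω + e ω * t) ∂μ))) (Real.log x')
          = ∫ ω, e ω ∂μ)
    ∧ HasDerivAt (fun t : ℝ => Real.log (∫ ω, Real.exp (a ω + e ω * t) ∂μ))
      ((∫ ω, Real.exp (a ω + e ω * Real.log x) * e ω ∂μ) /
       (∫ ω, Real.exp (a ω + e ω * Real.log x) ∂μ)) (Real.log x) :=
  stmt0_general μ a e hInta hInte φ hMom hMom1 x
end

section
/- Under the heterogeneous elasticity model with the stated integrability, fix φ ≠ 0 and suppose ε is not almost surely constant. Then the map x ↦ ε_φ(x) on (0,∞) is strictly increasing if φ > 0 and strictly decreasing if φ < 0. Consequently ε_φ is a non-constant function of x, and ε_φ(x) = ε₀ := E[ε] for at most one value of x > 0; in particular ε_φ(x) ≠ ε₀ for all x outside a single point. -/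
open MeasureTheory Real

/-- Pointwise correlation inequality: the key algebraic fact. -/
lemma key_pt' {u v φ : ℝ} (huv : u < v) (hφ : φ ≠ 0) (a1 a2 e1 e2 : ℝ) (h : e1 ≠ e2) :
    0 < (φ * e1 - φ * e2) * (Real.exp (φ * a1 + v * φ * e1) * Real.exp (φ * a2 + u * φ * e2)
      - Real.exp (φ * a1 + u * φ * e1) * Real.exp (φ * a2 + v * φ * e2)) := by
  have h1 : Real.exp (φ * a1 + v * φ * e1) * Real.exp (φ * a2 + u * φ * e2)
      = Real.exp (φ * a1 + φ * a2 + u * φ * e1 + u * φ * e2) * Real.exp ((v - u) * φ * e1) := by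
    rw [← Real.exp_add, ← Real.exp_add]; ring_nf
  have h2 : Real.exp (φ * a1 + u * φ * e1) * Real.exp (φ * a2 + v * φ * e2)
      = Real.exp (φ * a1 + φ * a2 + u * φ * e1 + u * φ * e2) * Real.exp ((v - u) * φ * e2) := by
    rw [← Real.exp_add, ← Real.exp_add]; ring_nf
  rw [h1, h2, ← mul_sub]
  have hE := Real.exp_pos (φ * a1 + φ * a2 + u * φ * e1 + u * φ * e2)
  have hb : φ * e1 ≠ φ * e2 := fun hh => h (mul_left_cancel₀ hφ hh)
  have hvu : 0 < v - u := sub_pos.mpr huv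
  have key : 0 < (φ * e1 - φ * e2) *
      (Real.exp ((v - u) * φ * e1) - Real.exp ((v - u) * φ * e2)) := by
    rcases hb.lt_or_gt with hlt | hlt
    · have hx : Real.exp ((v - u) * φ * e1) < Real.exp ((v - u) * φ * e2) :=
        Real.exp_lt_exp.mpr (by nlinarith)
      nlinarith
    · have hx : Real.exp ((v - u) * φ * e2) < Real.exp ((v - u) * φ * e1) :=
        Real.exp_lt_exp.mpr (by nlinarith)
      nlinarith
  nlinarith

lemma key_pt0 {u v φ : ℝ} (huv : u < v) (hφ : φ ≠ 0) (a1 a2 e1 e2 : ℝ) :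
    0 ≤ (φ * e1 - φ * e2) * (Real.exp (φ * a1 + v * φ * e1) * Real.exp (φ * a2 + u * φ * e2)
      - Real.exp (φ * a1 + u * φ * e1) * Real.exp (φ * a2 + v * φ * e2)) := by
  rcases eq_or_ne e1 e2 with rfl | h
  · simp
  · exact (key_pt' huv hφ a1 a2 e1 e2 h).le

/-- The power-mean elasticity via the representer lemma:
`ε_φ(x) = E[Y(x)^φ · ε] / E[Y(x)^φ]` with `Y(x)(ω) = exp (a ω + ε ω log x)`. -/
noncomputable def elphi {Ω : Type*} [MeasurableSpace Ω] (μ : Measure Ω)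
    (a e : Ω → ℝ) (φ x : ℝ) : ℝ :=
  (∫ ω, Real.exp (a ω + e ω * Real.log x) ^ φ * e ω ∂μ) /
  (∫ ω, Real.exp (a ω + e ω * Real.log x) ^ φ ∂μ)

/-- Under the heterogeneous elasticity model with the stated integrability,
if `φ ≠ 0` and `ε` is not a.s. constant, then `x ↦ ε_φ(x)` is strictly increasing on `(0,∞)`
when `φ > 0` and strictly decreasing when `φ < 0`; consequently it is non-constant and equals
`ε₀ = E[ε]` for at most one `x > 0`. -/
theorem stmt1
    {Ω : Type*} [MeasurableSpace Ω] (μ : Measure Ω) [IsProbabilityMeasure μ]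
    (a e : Ω → ℝ) (ha : Measurable a) (he : Measurable e)
    (hInta : Integrable a μ) (hInte : Integrable e μ)
    (φ : ℝ) (hφ : φ ≠ 0)
    (hMom : ∀ t : ℝ, Integrable (fun ω => (1 + e ω ^ 2) * Real.exp (φ * a ω + t * φ * e ω)) μ)
    (hnc : ¬ ∃ c : ℝ, ∀ᵐ ω ∂μ, e ω = c) :
    (0 < φ → StrictMonoOn (fun x => elphi μ a e φ x) (Set.Ioi 0))
    ∧ (φ < 0 → StrictAntiOn (fun x => elphi μ a e φ x) (Set.Ioi 0))
    ∧ (∃ x ∈ Set.Ioi (0:ℝ), ∃ y ∈ Set.Ioi (0:ℝ), elphi μ a e φ x ≠ elphi μ a e φ y)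
    ∧ (∀ x ∈ Set.Ioi (0:ℝ), ∀ y ∈ Set.Ioi (0:ℝ),
        elphi μ a e φ x = (∫ ω, e ω ∂μ) → elphi μ a e φ y = (∫ ω, e ω ∂μ) → x = y) := by
  classical
  set F : ℝ → Ω → ℝ := fun u ω => Real.exp (φ * a ω + u * φ * e ω) with hF_def
  have hFmeas : ∀ u, Measurable (F u) := fun u =>
    ((measurable_const.mul ha).add ((measurable_const.mul he))).exp
  -- integrability
  have hF_int : ∀ u, Integrable (F u) μ := by
    intro u
    refine (hMom u).mono' (hFmeas u).aestronglyMeasurable ?_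
    filter_upwards with ω
    rw [Real.norm_eq_abs, abs_of_pos (Real.exp_pos _)]
    nlinarith [Real.exp_pos (φ * a ω + u * φ * e ω), sq_nonneg (e ω)]
  have heF_int : ∀ u, Integrable (fun ω => e ω * F u ω) μ := by
    intro u
    refine (hMom u).mono' ((he.mul (hFmeas u)).aestronglyMeasurable) ?_
    filter_upwards with ω
    rw [Real.norm_eq_abs, abs_mul, abs_of_pos (Real.exp_pos _)]
    have h1 : |e ω| ≤ 1 + e ω ^ 2 := by nlinarith [sq_nonneg (|e ω| - 1), sq_abs (e ω)]
    nlinarith [Real.exp_pos (φ * a ω + u * φ * e ω)]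
  -- denominator positive
  have hD : ∀ u, 0 < ∫ ω, F u ω ∂μ := fun u => integral_exp_pos (hF_int u)
  -- rewrite elphi
  have hpow : ∀ t : ℝ, Real.exp t ^ φ = Real.exp (t * φ) := fun t => by
    rw [Real.rpow_def_of_pos (Real.exp_pos t), Real.log_exp]
  have helphi : ∀ x : ℝ, elphi μ a e φ x
      = (∫ ω, e ω * F (Real.log x) ω ∂μ) / (∫ ω, F (Real.log x) ω ∂μ) := by
    intro x
    unfold elphi
    have h1 : ∀ ω, Real.exp (a ω + e ω * Real.log x) ^ φ = F (Real.log x) ω := by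
      intro ω
      rw [hpow]
      congr 1
      ring
    congr 1
    · refine integral_congr_ae (Filter.Eventually.of_forall fun ω => ?_)
      show Real.exp (a ω + e ω * Real.log x) ^ φ * e ω = e ω * F (Real.log x) ω
      rw [h1, mul_comm]
    · refine integral_congr_ae (Filter.Eventually.of_forall fun ω => ?_)
      show Real.exp (a ω + e ω * Real.log x) ^ φ = F (Real.log x) ω
      rw [h1]
  -- positive measure of the off-diagonal set
  haveI : (MeasureTheory.ae μ).NeBot := ae_neBot.mpr (IsProbabilityMeasure.ne_zero μ)
  have hSm : MeasurableSet {p : Ω × Ω | e p.1 = e p.2} :=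
    measurableSet_eq_fun (he.comp measurable_fst) (he.comp measurable_snd)
  have hSpos : 0 < (μ.prod μ) {p : Ω × Ω | e p.1 ≠ e p.2} := by
    rw [pos_iff_ne_zero]
    intro h0
    have h0c : (μ.prod μ) ({p : Ω × Ω | e p.1 = e p.2}ᶜ) = 0 := h0
    rw [Measure.measure_prod_null hSm.compl] at h0c
    have h0' : ∀ᵐ ω ∂μ, μ (Prod.mk ω ⁻¹' {p : Ω × Ω | e p.1 = e p.2}ᶜ) = 0 := h0c
    obtain ⟨ω₀, hω₀⟩ := h0'.exists
    apply hnc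
    refine ⟨e ω₀, ?_⟩
    rw [ae_iff]
    have hset : {ω' | ¬ e ω' = e ω₀} = Prod.mk ω₀ ⁻¹' {p : Ω × Ω | e p.1 = e p.2}ᶜ := by
      ext ω'
      simp [eq_comm]
    rw [hset]
    exact hω₀
  -- the core correlation inequality
  have hcore : ∀ u v : ℝ, u < v →
      0 < φ * ((∫ ω, e ω * F v ω ∂μ) * (∫ ω, F u ω ∂μ)
        - (∫ ω, e ω * F u ω ∂μ) * (∫ ω, F v ω ∂μ)) := by
    intro u v huv
    set H : Ω × Ω → ℝ := fun p =>
      (φ * e p.1 - φ * e p.2) * (F v p.1 * F u p.2 - F u p.1 * F v p.2) with hH_def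
    have hHnn : ∀ p, 0 ≤ H p := fun p => key_pt0 huv hφ (a p.1) (a p.2) (e p.1) (e p.2)
    have hHpos : ∀ p : Ω × Ω, e p.1 ≠ e p.2 → 0 < H p := fun p h =>
      key_pt' huv hφ (a p.1) (a p.2) (e p.1) (e p.2) h
    -- the four product pieces
    have hg1 : Integrable (fun p : Ω × Ω => (e p.1 * F v p.1) * F u p.2) (μ.prod μ) :=
      (heF_int v).mul_prod (hF_int u)
    have hg2 : Integrable (fun p : Ω × Ω => (e p.1 * F u p.1) * F v p.2) (μ.prod μ) :=
      (heF_int u).mul_prod (hF_int v)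
    have hg3 : Integrable (fun p : Ω × Ω => F u p.1 * (e p.2 * F v p.2)) (μ.prod μ) :=
      (hF_int u).mul_prod (heF_int v)
    have hg4 : Integrable (fun p : Ω × Ω => F v p.1 * (e p.2 * F u p.2)) (μ.prod μ) :=
      (hF_int v).mul_prod (heF_int u)
    have hHeq : H = fun p => φ * ((e p.1 * F v p.1) * F u p.2 - (e p.1 * F u p.1) * F v p.2
        - F v p.1 * (e p.2 * F u p.2) + F u p.1 * (e p.2 * F v p.2)) := by
      funext p
      simp only [hH_def]
      ring
    have hHint : Integrable H (μ.prod μ) := by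
      rw [hHeq]
      exact (((hg1.sub hg2).sub hg4).add hg3).const_mul φ
    have hIH : ∫ p, H p ∂(μ.prod μ)
        = φ * (2 * ((∫ ω, e ω * F v ω ∂μ) * (∫ ω, F u ω ∂μ)
          - (∫ ω, e ω * F u ω ∂μ) * (∫ ω, F v ω ∂μ))) := by
      rw [hHeq]
      rw [integral_const_mul]
      rw [integral_add, integral_sub, integral_sub]
      rotate_left
      · exact hg1
      · exact hg2
      · exact hg1.sub hg2
      · exact hg4
      · exact (hg1.sub hg2).sub hg4
      · exact hg3
      rw [integral_prod_mul (fun ω => e ω * F v ω) (F u),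
        integral_prod_mul (fun ω => e ω * F u ω) (F v),
        integral_prod_mul (F v) (fun ω => e ω * F u ω),
        integral_prod_mul (F u) (fun ω => e ω * F v ω)]
      ring
    have hpos : 0 < ∫ p, H p ∂(μ.prod μ) := by
      rw [integral_pos_iff_support_of_nonneg_ae (Filter.Eventually.of_forall hHnn) hHint]
      refine lt_of_lt_of_le hSpos (measure_mono ?_)
      intro p hp
      exact (hHpos p hp).ne'
    rw [hIH] at hpos
    nlinarith
  -- monotone in u, depending on sign of φ
  have hmonoU : 0 < φ → ∀ u v : ℝ, u < v →
      (∫ ω, e ω * F u ω ∂μ) / (∫ ω, F u ω ∂μ)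
        < (∫ ω, e ω * F v ω ∂μ) / (∫ ω, F v ω ∂μ) := by
    intro hφp u v huv
    rw [div_lt_div_iff₀ (hD u) (hD v)]
    have h := hcore u v huv
    nlinarith
  have hantiU : φ < 0 → ∀ u v : ℝ, u < v →
      (∫ ω, e ω * F v ω ∂μ) / (∫ ω, F v ω ∂μ)
        < (∫ ω, e ω * F u ω ∂μ) / (∫ ω, F u ω ∂μ) := by
    intro hφn u v huv
    rw [div_lt_div_iff₀ (hD v) (hD u)]
    have h := hcore u v huv
    nlinarith
  have part1 : 0 < φ → StrictMonoOn (fun x => elphi μ a e φ x) (Set.Ioi 0) := by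
    intro hφp x hx y hy hxy
    simp only [helphi]
    exact hmonoU hφp _ _ (Real.log_lt_log hx hxy)
  have part2 : φ < 0 → StrictAntiOn (fun x => elphi μ a e φ x) (Set.Ioi 0) := by
    intro hφn x hx y hy hxy
    simp only [helphi]
    exact hantiU hφn _ _ (Real.log_lt_log hx hxy)
  refine ⟨part1, part2, ?_, ?_⟩
  · refine ⟨1, by norm_num, Real.exp 1, Real.exp_pos 1, ?_⟩
    have h1e : (1:ℝ) < Real.exp 1 := by
      have := Real.add_one_le_exp 1
      linarith
    rcases hφ.lt_or_gt with hφn | hφp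
    · exact (part2 hφn (by norm_num) (Real.exp_pos 1) h1e).ne'
    · exact (part1 hφp (by norm_num) (Real.exp_pos 1) h1e).ne
  · intro x hx y hy h1 h2
    have heq : elphi μ a e φ x = elphi μ a e φ y := by rw [h1, h2]
    rcases hφ.lt_or_gt with hφn | hφp
    · exact (part2 hφn).injOn hx hy heq
    · exact (part1 hφp).injOn hx hy heq
end

section
/- In the heterogeneous elasticity model, suppose a ≡ a is a deterministic real constant and ε is Gaussian with mean ε̄ and variance σ² > 0. Then for every φ ∈ ℝ and every x > 0 the power mean has the closed form M_φ(x) = exp( a + ε̄·log x + (1/2)·φ·σ²·(log x)² ), and the associated power-mean elasticity is ε_φ(x) = ε̄ + φ·σ²·log x. In particular ε_0 = ε̄ (constant) and ε_1(x) = ε̄ + σ²·log x. -/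
open MeasureTheory Real ProbabilityTheory

/-- The power mean `M_φ(x)`: `(E[Y(x)^φ])^{1/φ}` for `φ ≠ 0` and the geometric mean
`exp (E[log Y(x)])` for `φ = 0`, where `Y(x)(ω) = exp (a ω + ε ω · log x)`. -/
noncomputable def MpowAll {Ω : Type*} [MeasurableSpace Ω] (μ : Measure Ω)
    (a e : Ω → ℝ) (φ x : ℝ) : ℝ :=
  if φ = 0 then Real.exp (∫ ω, (a ω + e ω * Real.log x) ∂μ)
  else (∫ ω, Real.exp (a ω + e ω * Real.log x) ^ φ ∂μ) ^ (1 / φ)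

/-- The power-mean elasticity `ε_φ(x) = d (log M_φ(x)) / d (log x)`. -/
noncomputable def elasAll {Ω : Type*} [MeasurableSpace Ω] (μ : Measure Ω)
    (a e : Ω → ℝ) (φ x : ℝ) : ℝ :=
  deriv (fun t : ℝ => Real.log (MpowAll μ a e φ (Real.exp t))) (Real.log x)

/-! With a constant intercept `c`, `Y(x)^φ = exp (φ c) · exp (φ log x · ε)`, so `E[Y(x)^φ]` is
`exp (φ c)` times the Gaussian moment generating function at `φ log x`, and
`log M_φ(x) = c + ε̄ log x + φ σ² (log x)² / 2` is a quadratic polynomial in `log x`, whose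
derivative is the elasticity. The geometric mean `φ = 0` only needs `E[ε] = ε̄`. -/

section GaussianPowerMean

variable {Ω : Type*} [MeasurableSpace Ω] {μ : Measure Ω} {e : Ω → ℝ} {m : ℝ} {v : NNReal}

lemma aemeasurable_of_map_eq_gaussianReal (hlaw : μ.map e = gaussianReal m v) :
    AEMeasurable e μ :=
  aemeasurable_of_map_neZero (by rw [hlaw]; infer_instance)

lemma integrable_of_map_eq_gaussianReal (hlaw : μ.map e = gaussianReal m v) :
    Integrable e μ := by
  have hid : Integrable id (μ.map e) := by
    rw [hlaw]
    exact memLp_one_iff_integrable.mp (memLp_id_gaussianReal 1)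
  exact hid.comp_aemeasurable (aemeasurable_of_map_eq_gaussianReal hlaw)

lemma integral_of_map_eq_gaussianReal (hlaw : μ.map e = gaussianReal m v) :
    ∫ ω, e ω ∂μ = m := by
  rw [← integral_id_gaussianReal (μ := m) (v := v), ← hlaw]
  exact (integral_map (aemeasurable_of_map_eq_gaussianReal hlaw) aestronglyMeasurable_id).symm

lemma MpowAll_zero_const_of_map_eq_gaussianReal [IsProbabilityMeasure μ]
    (hlaw : μ.map e = gaussianReal m v) (c x : ℝ) :
    MpowAll μ (fun _ => c) e 0 x = exp (c + m * log x) := by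
  rw [MpowAll, if_pos rfl,
    integral_add (integrable_const c) ((integrable_of_map_eq_gaussianReal hlaw).mul_const _),
    integral_mul_const, integral_of_map_eq_gaussianReal hlaw]
  simp

lemma MpowAll_const_of_map_eq_gaussianReal_of_ne_zero (hlaw : μ.map e = gaussianReal m v)
    (c : ℝ) {φ : ℝ} (hφ : φ ≠ 0) (x : ℝ) :
    MpowAll μ (fun _ => c) e φ x = exp (c + m * log x + φ * v * log x ^ 2 / 2) := by
  have hsplit : ∀ ω, exp (c + e ω * log x) ^ φ = exp ((φ * log x) * e ω) * exp (φ * c) := by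
    intro ω
    rw [← exp_mul, ← exp_add]
    ring_nf
  have hmgf : ∫ ω, exp ((φ * log x) * e ω) ∂μ = exp (m * (φ * log x) + v * (φ * log x) ^ 2 / 2) :=
    mgf_gaussianReal hlaw (φ * log x)
  rw [MpowAll, if_neg hφ]
  simp_rw [hsplit]
  rw [integral_mul_const, hmgf, ← exp_add, ← exp_mul]
  congr 1
  field_simp
  ring

lemma MpowAll_const_of_map_eq_gaussianReal [IsProbabilityMeasure μ]
    (hlaw : μ.map e = gaussianReal m v) (c φ x : ℝ) :
    MpowAll μ (fun _ => c) e φ x = exp (c + m * log x + φ * v * log x ^ 2 / 2) := by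
  rcases eq_or_ne φ 0 with rfl | hφ
  · simpa using MpowAll_zero_const_of_map_eq_gaussianReal hlaw c x
  · exact MpowAll_const_of_map_eq_gaussianReal_of_ne_zero hlaw c hφ x

lemma elasAll_const_of_map_eq_gaussianReal [IsProbabilityMeasure μ]
    (hlaw : μ.map e = gaussianReal m v) (c φ x : ℝ) :
    elasAll μ (fun _ => c) e φ x = m + φ * v * log x := by
  have hlogM : (fun t => log (MpowAll μ (fun _ => c) e φ (exp t)))
      = fun t => c + m * t + φ * v * t ^ 2 / 2 := by
    funext t
    rw [MpowAll_const_of_map_eq_gaussianReal hlaw, log_exp, log_exp]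
  have hderiv : HasDerivAt (fun t : ℝ => c + m * t + φ * v * t ^ 2 / 2)
      (m + φ * v * log x) (log x) := by
    refine ((((hasDerivAt_id' (log x)).const_mul m).const_add c).add
      (((hasDerivAt_pow 2 (log x)).const_mul (φ * v)).div_const 2)).congr_deriv ?_
    push_cast
    ring
  rw [elasAll, hlogM, hderiv.deriv]

end GaussianPowerMean

theorem stmt5_general
    {Ω : Type*} [MeasurableSpace Ω] (μ : Measure Ω) [IsProbabilityMeasure μ]
    (c : ℝ) (e : Ω → ℝ)
    (ebar : ℝ) (v : NNReal)
    (hlaw : Measure.map e μ = gaussianReal ebar v) :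
    ∀ φ x : ℝ, 0 < x →
      MpowAll μ (fun _ => c) e φ x
        = Real.exp (c + ebar * Real.log x + φ * (v : ℝ) * (Real.log x) ^ 2 / 2)
      ∧ elasAll μ (fun _ => c) e φ x = ebar + φ * (v : ℝ) * Real.log x
      ∧ elasAll μ (fun _ => c) e 0 x = ebar
      ∧ elasAll μ (fun _ => c) e 1 x = ebar + (v : ℝ) * Real.log x := by
  intro φ x _
  exact ⟨MpowAll_const_of_map_eq_gaussianReal hlaw c φ x,
    elasAll_const_of_map_eq_gaussianReal hlaw c φ x,
    by simpa using elasAll_const_of_map_eq_gaussianReal hlaw c 0 x,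
    by simpa using elasAll_const_of_map_eq_gaussianReal hlaw c 1 x⟩

/-- closed-form power-mean elasticities under Gaussianity.
If `a ≡ c` is a deterministic constant and `ε ~ N(ε̄, σ²)` with `σ² = v > 0`, then for every
`φ ∈ ℝ` and `x > 0`,
`M_φ(x) = exp (c + ε̄ log x + (1/2) φ v (log x)²)` and `ε_φ(x) = ε̄ + φ v log x`;
in particular `ε_0(x) = ε̄` and `ε_1(x) = ε̄ + v log x`. -/
theorem stmt5
    {Ω : Type*} [MeasurableSpace Ω] (μ : Measure Ω) [IsProbabilityMeasure μ]
    (c : ℝ) (e : Ω → ℝ) (he : Measurable e)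
    (ebar : ℝ) (v : NNReal) (hv : 0 < v)
    (hlaw : Measure.map e μ = gaussianReal ebar v) :
    ∀ φ x : ℝ, 0 < x →
      MpowAll μ (fun _ => c) e φ x
        = Real.exp (c + ebar * Real.log x + φ * (v : ℝ) * (Real.log x) ^ 2 / 2)
      ∧ elasAll μ (fun _ => c) e φ x = ebar + φ * (v : ℝ) * Real.log x
      ∧ elasAll μ (fun _ => c) e 0 x = ebar
      ∧ elasAll μ (fun _ => c) e 1 x = ebar + (v : ℝ) * Real.log x :=
  stmt5_general μ c e ebar v hlaw
end

section
/- In the heterogeneous elasticity model with a a deterministic real constant and ε Gaussian with mean ε̄ and variance σ² > 0, the entire family of power-mean elasticities admits the affine representation ε_φ(x) = (1 − φ)·ε₀ + φ·ε_1(x) for every φ ∈ ℝ and every x > 0, where ε₀ = ε̄ is the geometric-mean elasticity and ε_1(x) = ε̄ + σ²·log x is the arithmetic-mean elasticity. -/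
open MeasureTheory Real ProbabilityTheory

section ConstantIntercept

variable {Ω : Type*} [MeasurableSpace Ω] (μ : Measure Ω) (c : ℝ) (e : Ω → ℝ)

lemma log_MpowAll_zero_exp [IsProbabilityMeasure μ] (he : Integrable e μ) (t : ℝ) :
    log (MpowAll μ (fun _ => c) e 0 (exp t)) = c + μ[e] * t := by
  simp only [MpowAll, log_exp]
  rw [integral_add (integrable_const c) (he.mul_const t), integral_const, integral_mul_const]
  simp

lemma log_MpowAll_exp_of_ne_zero {φ : ℝ} (hφ : φ ≠ 0) {t : ℝ} (hmgf : 0 < mgf e μ (φ * t)) :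
    log (MpowAll μ (fun _ => c) e φ (exp t)) = c + cgf e μ (φ * t) / φ := by
  have hpow : ∀ ω, exp (c + e ω * log (exp t)) ^ φ = exp (φ * c) * exp (φ * t * e ω) := by
    intro ω
    rw [log_exp, ← exp_mul, ← exp_add]
    ring_nf
  simp only [MpowAll, if_neg hφ, hpow, integral_const_mul]
  rw [← mgf, log_rpow (by positivity), log_mul (exp_pos _).ne' hmgf.ne', log_exp, cgf]
  field_simp

lemma log_MpowAll_exp_of_map_eq_gaussianReal [IsProbabilityMeasure μ] {ebar : ℝ} {v : NNReal}
    (hlaw : μ.map e = gaussianReal ebar v) (φ t : ℝ) :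
    log (MpowAll μ (fun _ => c) e φ (exp t)) = c + ebar * t + φ * v * t ^ 2 / 2 := by
  rcases eq_or_ne φ 0 with rfl | hφ
  · have hX : HasLaw e (gaussianReal ebar v) μ :=
      ⟨.of_map_ne_zero (by rw [hlaw]; exact NeZero.ne _), hlaw⟩
    have he : Integrable e μ :=
      (integrable_map_measure aestronglyMeasurable_id hX.aemeasurable).mp
        (hlaw ▸ (memLp_id_gaussianReal 1).integrable le_rfl)
    rw [log_MpowAll_zero_exp μ c e he, hX.integral_eq, integral_id_gaussianReal]
    ring
  · rw [log_MpowAll_exp_of_ne_zero μ c e hφ (by rw [mgf_gaussianReal hlaw]; positivity),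
      cgf_gaussianReal hlaw]
    field_simp
    ring

lemma elasAll_eq_of_log_MpowAll_exp_eq {a : Ω → ℝ} {φ b q : ℝ}
    (h : ∀ t, log (MpowAll μ a e φ (exp t)) = c + b * t + q * t ^ 2 / 2) (x : ℝ) :
    elasAll μ a e φ x = b + q * log x := by
  have hderiv : HasDerivAt (fun t => c + b * t + q * t ^ 2 / 2) (b + q * log x) (log x) := by
    have := (((hasDerivAt_id' (log x)).const_mul b).const_add c).add
      (((hasDerivAt_pow 2 (log x)).const_mul q).div_const 2)
    exact this.congr_deriv (by norm_num; ring)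
  rw [elasAll, funext h, hderiv.deriv]

lemma elasAll_of_map_eq_gaussianReal [IsProbabilityMeasure μ] {ebar : ℝ} {v : NNReal}
    (hlaw : μ.map e = gaussianReal ebar v) (φ x : ℝ) :
    elasAll μ (fun _ => c) e φ x = ebar + φ * v * log x :=
  elasAll_eq_of_log_MpowAll_exp_eq μ c e
    (log_MpowAll_exp_of_map_eq_gaussianReal μ c e hlaw φ) x

end ConstantIntercept

theorem stmt6_general
    {Ω : Type*} [MeasurableSpace Ω] (μ : Measure Ω) [IsProbabilityMeasure μ]
    (c : ℝ) (e : Ω → ℝ)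
    (ebar : ℝ) (v : NNReal)
    (hlaw : Measure.map e μ = gaussianReal ebar v) :
    ∀ φ x : ℝ, 0 < x →
      elasAll μ (fun _ => c) e φ x
        = (1 - φ) * (elasAll μ (fun _ => c) e 0 x) + φ * (elasAll μ (fun _ => c) e 1 x)
      ∧ elasAll μ (fun _ => c) e 0 x = ebar
      ∧ elasAll μ (fun _ => c) e 1 x = ebar + (v : ℝ) * Real.log x := by
  intro φ x _
  simp only [elasAll_of_map_eq_gaussianReal μ c e hlaw]
  refine ⟨by ring, by ring, by ring⟩

/-- affine representation under Gaussianity. If `a ≡ c` is a deterministic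
constant and `ε ~ N(ε̄, σ²)` with `σ² = v > 0`, then for every `φ ∈ ℝ` and `x > 0`,
`ε_φ(x) = (1 − φ)·ε₀ + φ·ε_1(x)` where `ε₀ = ε̄` is the geometric-mean elasticity and
`ε_1(x) = ε̄ + v·log x` is the arithmetic-mean elasticity. -/
theorem stmt6
    {Ω : Type*} [MeasurableSpace Ω] (μ : Measure Ω) [IsProbabilityMeasure μ]
    (c : ℝ) (e : Ω → ℝ) (he : Measurable e)
    (ebar : ℝ) (v : NNReal) (hv : 0 < v)
    (hlaw : Measure.map e μ = gaussianReal ebar v) :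
    ∀ φ x : ℝ, 0 < x →
      elasAll μ (fun _ => c) e φ x
        = (1 - φ) * (elasAll μ (fun _ => c) e 0 x) + φ * (elasAll μ (fun _ => c) e 1 x)
      ∧ elasAll μ (fun _ => c) e 0 x = ebar
      ∧ elasAll μ (fun _ => c) e 1 x = ebar + (v : ℝ) * Real.log x :=
  stmt6_general μ c e ebar v hlaw
end

section
/- Let ψ : (0,∞) → ℝ be continuous and strictly monotone, and suppose the two-point quasi-arithmetic mean generated by ψ is homogeneous: for all y₁, y₂ > 0, all w ∈ [0,1], and all k > 0, ψ⁻¹( w·ψ(k·y₁) + (1−w)·ψ(k·y₂) ) = k · ψ⁻¹( w·ψ(y₁) + (1−w)·ψ(y₂) ). Then there exist constants c ≠ 0 and d ∈ ℝ such that either ψ(y) = c·y^φ + d for all y > 0 for some φ ≠ 0, or ψ(y) = c·log y + d for all y > 0. Consequently the quasi-arithmetic mean generated by ψ is a power mean. -/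
/-!
For `k > 0` the map `s ↦ ψ (k * ψinv s)` preserves convex combinations on the interval
`ψ '' Ioi 0`, so it is affine there: `ψ (k * y) = A k * ψ y + B k`. Computing `ψ (k * l * y)` in
two ways shows that `A` is continuous and multiplicative, hence `A k = k ^ φ`, and that
`B (k * l) = A k * B l + B k`. If `φ = 0` this makes `B` a continuous logarithm, `B k = c * log k`;
otherwise the symmetry of `B (k * l)` in `k` and `l` forces `B = d * (1 - A)`.
-/

open Real Set

def MapsConvexCombOn (T : ℝ → ℝ) (J : Set ℝ) : Prop :=
  ∀ ⦃x⦄, x ∈ J → ∀ ⦃y⦄, y ∈ J → ∀ ⦃a b : ℝ⦄, 0 ≤ a → 0 ≤ b → a + b = 1 →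
    T (a * x + b * y) = a * T x + b * T y

namespace MapsConvexCombOn

variable {T : ℝ → ℝ} {J : Set ℝ}

lemma sub_affine (hT : MapsConvexCombOn T J) (p q : ℝ) :
    MapsConvexCombOn (fun s => T s - (p * s + q)) J := by
  intro x hx y hy a b ha hb hab
  simp only [hT hx hy ha hb hab]
  linear_combination q * hab

lemma eq_zero_of_mem_segment (hT : MapsConvexCombOn T J) {s p q : ℝ} (hs : s ∈ J) (hq : q ∈ J)
    (hpq : p ≠ q) (hp0 : T p = 0) (hq0 : T q = 0) (h : p ∈ segment ℝ s q) : T s = 0 := by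
  obtain ⟨a, b, ha, hb, hab, rfl⟩ := h
  simp only [smul_eq_mul] at hp0 hpq
  rcases eq_or_ne a 0 with rfl | ha0
  · obtain rfl : b = 1 := by linarith
    simp at hpq
  · have h := hT hs hq ha hb hab
    rw [hp0, hq0, mul_zero, add_zero] at h
    exact (mul_eq_zero.1 h.symm).resolve_left ha0

lemma eqOn_zero (hT : MapsConvexCombOn T J) {p q : ℝ} (hp : p ∈ J) (hq : q ∈ J) (hpq : p ≠ q)
    (hp0 : T p = 0) (hq0 : T q = 0) : EqOn T 0 J := by
  intro s hs
  have : s ∈ segment ℝ p q ∨ p ∈ segment ℝ s q ∨ q ∈ segment ℝ s p := by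
    simp only [segment_eq_uIcc, mem_uIcc]
    rcases le_total s p with h₁ | h₁ <;> rcases le_total s q with h₂ | h₂ <;>
      rcases le_total p q with h₃ | h₃ <;> tauto
  rcases this with ⟨a, b, ha, hb, hab, rfl⟩ | h | h
  · simpa [hp0, hq0] using hT hp hq ha hb hab
  · exact hT.eq_zero_of_mem_segment hs hq hpq hp0 hq0 h
  · exact hT.eq_zero_of_mem_segment hs hp hpq.symm hq0 hp0 h

lemma exists_affine (hT : MapsConvexCombOn T J) : ∃ p q : ℝ, ∀ s ∈ J, T s = p * s + q := by
  rcases J.subsingleton_or_nontrivial with hJ | ⟨a, ha, b, hb, hab⟩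
  · rcases J.eq_empty_or_nonempty with rfl | ⟨a, ha⟩
    · simp
    · exact ⟨0, T a, fun s hs => by rw [hJ hs ha]; ring⟩
  · set p := (T b - T a) / (b - a)
    have hba : b - a ≠ 0 := sub_ne_zero.2 hab.symm
    refine ⟨p, T a - p * a, fun s hs => ?_⟩
    have := (hT.sub_affine p (T a - p * a)).eqOn_zero ha hb hab (by ring)
      (by simp only [p]; field_simp; ring) hs
    simp only [Pi.zero_apply] at this
    linarith

end MapsConvexCombOn

lemma mapsConvexCombOn_of_homogeneous {ψ ψinv : ℝ → ℝ} (hcont : ContinuousOn ψ (Ioi 0))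
    (hinv : ∀ y : ℝ, 0 < y → ψinv (ψ y) = y)
    (hhom : ∀ y₁ : ℝ, 0 < y₁ → ∀ y₂ : ℝ, 0 < y₂ →
      ∀ w : ℝ, w ∈ Icc (0:ℝ) 1 → ∀ k : ℝ, 0 < k →
      ψinv (w * ψ (k * y₁) + (1 - w) * ψ (k * y₂)) = k * ψinv (w * ψ y₁ + (1 - w) * ψ y₂))
    {k : ℝ} (hk : 0 < k) : MapsConvexCombOn (fun s => ψ (k * ψinv s)) (ψ '' Ioi 0) := by
  have hJ : Convex ℝ (ψ '' Ioi 0) := (isPreconnected_Ioi.image ψ hcont).convex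
  rintro _ ⟨y₁, hy₁, rfl⟩ _ ⟨y₂, hy₂, rfl⟩ a b ha hb hab
  obtain rfl : b = 1 - a := by linarith
  obtain ⟨u, hu, hψu⟩ : a * ψ (k * y₁) + (1 - a) * ψ (k * y₂) ∈ ψ '' Ioi 0 :=
    hJ (mem_image_of_mem ψ (mul_pos hk hy₁)) (mem_image_of_mem ψ (mul_pos hk hy₂)) ha hb hab
  simp only [hinv y₁ hy₁, hinv y₂ hy₂]
  rw [← hhom y₁ hy₁ y₂ hy₂ a ⟨ha, by linarith⟩ k hk, ← hψu, hinv u hu]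

lemma exists_eq_mul_log_of_map_mul {B : ℝ → ℝ} (hB : ContinuousOn B (Ioi 0))
    (hmul : ∀ k > 0, ∀ l > 0, B (k * l) = B k + B l) : ∃ c, ∀ k > 0, B k = c * log k := by
  let g : ℝ →+ ℝ :=
    { toFun := fun t => B (exp t)
      map_zero' := by simpa using hmul 1 one_pos 1 one_pos
      map_add' := fun s t => by simp only [exp_add, hmul _ (exp_pos s) _ (exp_pos t)] }
  have hg : Continuous g := hB.comp_continuous continuous_exp exp_pos
  refine ⟨B (exp 1), fun k hk => ?_⟩
  simpa [g, exp_log hk, mul_comm] using map_real_smul g hg (log k) 1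

lemma exists_eq_rpow_of_map_mul {A : ℝ → ℝ} (hA : ContinuousOn A (Ioi 0))
    (hpos : ∀ k > 0, 0 < A k) (hmul : ∀ k > 0, ∀ l > 0, A (k * l) = A k * A l) :
    ∃ φ : ℝ, ∀ k > 0, A k = k ^ φ := by
  obtain ⟨φ, hφ⟩ := exists_eq_mul_log_of_map_mul (hA.log fun k hk => (hpos k hk).ne')
    fun k hk l hl => by rw [hmul k hk l hl, log_mul (hpos k hk).ne' (hpos l hl).ne']
  refine ⟨φ, fun k hk => ?_⟩
  rw [rpow_def_of_pos hk, mul_comm, ← hφ k hk, exp_log (hpos k hk)]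

lemma ContinuousOn.comp_mul_const_Ioi {f : ℝ → ℝ} (hf : ContinuousOn f (Ioi 0)) {y : ℝ}
    (hy : 0 < y) : ContinuousOn (fun k => f (k * y)) (Ioi 0) :=
  hf.comp (continuousOn_id.mul continuousOn_const) fun _ hk => mul_pos hk hy

def RescalesAffinely (f A B : ℝ → ℝ) : Prop :=
  ∀ k > 0, ∀ y > 0, f (k * y) = A k * f y + B k

namespace RescalesAffinely

variable {f A B : ℝ → ℝ} {y₁ y₂ k l : ℝ}

lemma coeff_mul_sub (h : RescalesAffinely f A B) (hk : 0 < k) (hy₁ : 0 < y₁) (hy₂ : 0 < y₂) :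
    A k * (f y₂ - f y₁) = f (k * y₂) - f (k * y₁) := by
  rw [h k hk y₂ hy₂, h k hk y₁ hy₁]
  ring

lemma coeff_eq_div (h : RescalesAffinely f A B) (hk : 0 < k) (hy₁ : 0 < y₁) (hy₂ : 0 < y₂)
    (hne : f y₁ ≠ f y₂) : A k = (f (k * y₂) - f (k * y₁)) / (f y₂ - f y₁) := by
  rw [← h.coeff_mul_sub hk hy₁ hy₂, mul_div_cancel_right₀ _ (sub_ne_zero.2 hne.symm)]

lemma continuousOn_coeff (h : RescalesAffinely f A B) (hf : ContinuousOn f (Ioi 0))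
    (hy₁ : 0 < y₁) (hy₂ : 0 < y₂) (hne : f y₁ ≠ f y₂) : ContinuousOn A (Ioi 0) :=
  (((hf.comp_mul_const_Ioi hy₂).sub (hf.comp_mul_const_Ioi hy₁)).div_const _).congr
    fun _ hk => h.coeff_eq_div hk hy₁ hy₂ hne

lemma continuousOn_shift (h : RescalesAffinely f A B) (hf : ContinuousOn f (Ioi 0))
    (hy₁ : 0 < y₁) (hy₂ : 0 < y₂) (hne : f y₁ ≠ f y₂) : ContinuousOn B (Ioi 0) :=
  ((hf.comp_mul_const_Ioi hy₁).sub
    ((h.continuousOn_coeff hf hy₁ hy₂ hne).mul (continuousOn_const (c := f y₁)))).congr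
    fun k hk => by simp only [Pi.sub_apply, Pi.mul_apply, h k hk y₁ hy₁]; ring

lemma coeff_mul (h : RescalesAffinely f A B) (hy₁ : 0 < y₁) (hy₂ : 0 < y₂) (hne : f y₁ ≠ f y₂)
    (hk : 0 < k) (hl : 0 < l) : A (k * l) = A k * A l := by
  refine mul_right_cancel₀ (sub_ne_zero.2 hne.symm) ?_
  calc A (k * l) * (f y₂ - f y₁) = f (k * (l * y₂)) - f (k * (l * y₁)) := by
        rw [h.coeff_mul_sub (mul_pos hk hl) hy₁ hy₂, mul_assoc, mul_assoc]
    _ = A k * A l * (f y₂ - f y₁) := by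
        rw [← h.coeff_mul_sub hk (mul_pos hl hy₁) (mul_pos hl hy₂),
          ← h.coeff_mul_sub hl hy₁ hy₂, mul_assoc]

lemma shift_mul (h : RescalesAffinely f A B) (hy₁ : 0 < y₁) (hy₂ : 0 < y₂) (hne : f y₁ ≠ f y₂)
    (hk : 0 < k) (hl : 0 < l) : B (k * l) = A k * B l + B k := by
  have e := h (k * l) (mul_pos hk hl) y₁ hy₁
  rw [mul_assoc, h k hk _ (mul_pos hl hy₁), h l hl y₁ hy₁, h.coeff_mul hy₁ hy₂ hne hk hl] at e
  linear_combination -e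

lemma coeff_one (h : RescalesAffinely f A B) (hy₁ : 0 < y₁) (hy₂ : 0 < y₂)
    (hne : f y₁ ≠ f y₂) : A 1 = 1 := by
  have e := h.coeff_mul_sub one_pos hy₁ hy₂
  rw [one_mul, one_mul] at e
  exact mul_right_cancel₀ (sub_ne_zero.2 hne.symm) (e.trans (one_mul _).symm)

lemma coeff_pos (h : RescalesAffinely f A B) (hy₁ : 0 < y₁) (hy₂ : 0 < y₂) (hne : f y₁ ≠ f y₂)
    (hk : 0 < k) : 0 < A k := by
  have hsq : A k = A √k ^ 2 := by
    rw [sq, ← h.coeff_mul hy₁ hy₂ hne (sqrt_pos.2 hk) (sqrt_pos.2 hk), mul_self_sqrt hk.le]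
  have hinv : A k * A k⁻¹ = 1 := by
    rw [← h.coeff_mul hy₁ hy₂ hne hk (inv_pos.2 hk), mul_inv_cancel₀ hk.ne',
      h.coeff_one hy₁ hy₂ hne]
  exact lt_of_le_of_ne (hsq ▸ sq_nonneg _) fun h0 => by simp [← h0] at hinv

lemma eq_mul_log_add (h : RescalesAffinely f A B) (hf : ContinuousOn f (Ioi 0)) (hy₁ : 0 < y₁)
    (hy₂ : 0 < y₂) (hne : f y₁ ≠ f y₂) (hA : ∀ k > 0, A k = 1) :
    ∃ c, ∀ y > 0, f y = c * log y + f 1 := by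
  obtain ⟨c, hc⟩ := exists_eq_mul_log_of_map_mul (h.continuousOn_shift hf hy₁ hy₂ hne)
    fun k hk l hl => by rw [h.shift_mul hy₁ hy₂ hne hk hl, hA k hk, one_mul, add_comm]
  refine ⟨c, fun y hy => ?_⟩
  rw [← mul_one y, h y hy 1 one_pos, hA y hy, hc y hy, mul_one]
  ring

lemma eq_mul_rpow_add (h : RescalesAffinely f A B) (hy₁ : 0 < y₁) (hy₂ : 0 < y₂)
    (hne : f y₁ ≠ f y₂) {φ : ℝ} (hφ : φ ≠ 0) (hA : ∀ k > 0, A k = k ^ φ) :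
    ∃ d, ∀ y > 0, f y = (f 1 - d) * y ^ φ + d := by
  have he : 1 - A (exp 1) ≠ 0 := by
    rw [hA _ (exp_pos 1), exp_one_rpow, sub_ne_zero, ne_comm, Ne, exp_eq_one_iff]
    exact hφ
  refine ⟨B (exp 1) / (1 - A (exp 1)), fun y hy => ?_⟩
  have hB : B y * (1 - A (exp 1)) = B (exp 1) * (1 - A y) := by
    have e := h.shift_mul hy₁ hy₂ hne hy (exp_pos 1)
    rw [mul_comm, h.shift_mul hy₁ hy₂ hne (exp_pos 1) hy] at e
    linear_combination -e
  rw [← mul_one y, h y hy 1 one_pos, mul_one, ← hA y hy]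
  field_simp
  linear_combination hB

theorem exists_eq_rpow_or_log (h : RescalesAffinely f A B) (hf : ContinuousOn f (Ioi 0))
    (hy₁ : 0 < y₁) (hy₂ : 0 < y₂) (hne : f y₁ ≠ f y₂) :
    ∃ c : ℝ, c ≠ 0 ∧ ∃ d : ℝ,
      (∃ φ : ℝ, φ ≠ 0 ∧ ∀ y : ℝ, 0 < y → f y = c * y ^ φ + d)
      ∨ (∀ y : ℝ, 0 < y → f y = c * log y + d) := by
  obtain ⟨φ, hφ⟩ := exists_eq_rpow_of_map_mul (h.continuousOn_coeff hf hy₁ hy₂ hne)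
    (fun _ hk => h.coeff_pos hy₁ hy₂ hne hk) fun _ hk _ hl => h.coeff_mul hy₁ hy₂ hne hk hl
  rcases eq_or_ne φ 0 with rfl | hφ0
  · obtain ⟨c, hc⟩ := h.eq_mul_log_add hf hy₁ hy₂ hne fun k hk => by rw [hφ k hk, rpow_zero]
    refine ⟨c, ?_, f 1, Or.inr hc⟩
    rintro rfl
    simp [hc y₁ hy₁, hc y₂ hy₂] at hne
  · obtain ⟨d, hd⟩ := h.eq_mul_rpow_add hy₁ hy₂ hne hφ0 hφ
    refine ⟨f 1 - d, ?_, d, Or.inl ⟨φ, hφ0, hd⟩⟩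
    intro h0
    simp [hd y₁ hy₁, hd y₂ hy₂, h0] at hne

end RescalesAffinely

theorem stmt8_general (ψ ψinv : ℝ → ℝ)
    (hcont : ContinuousOn ψ (Set.Ioi 0))
    (hinv : ∀ y : ℝ, 0 < y → ψinv (ψ y) = y)
    (hhom : ∀ y₁ : ℝ, 0 < y₁ → ∀ y₂ : ℝ, 0 < y₂ →
      ∀ w : ℝ, w ∈ Set.Icc (0:ℝ) 1 → ∀ k : ℝ, 0 < k →
      ψinv (w * ψ (k * y₁) + (1 - w) * ψ (k * y₂))
        = k * ψinv (w * ψ y₁ + (1 - w) * ψ y₂)) :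
    ∃ c : ℝ, c ≠ 0 ∧ ∃ d : ℝ,
      (∃ φ : ℝ, φ ≠ 0 ∧ ∀ y : ℝ, 0 < y → ψ y = c * y ^ φ + d)
      ∨ (∀ y : ℝ, 0 < y → ψ y = c * Real.log y + d) := by
  have hne : ψ 1 ≠ ψ 2 := fun h12 => by
    have := congrArg ψinv h12
    rw [hinv 1 one_pos, hinv 2 two_pos] at this
    norm_num at this
  have haff : ∀ k > 0, ∃ a b : ℝ, ∀ y > 0, ψ (k * y) = a * ψ y + b := fun k hk => by
    obtain ⟨a, b, hab⟩ := (mapsConvexCombOn_of_homogeneous hcont hinv hhom hk).exists_affine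
    exact ⟨a, b, fun y hy => by simpa [hinv y hy] using hab (ψ y) (mem_image_of_mem ψ hy)⟩
  choose! A B hAB using haff
  exact RescalesAffinely.exists_eq_rpow_or_log hAB hcont one_pos two_pos hne

/-- homogeneous quasi-arithmetic means are power means.
Let `ψ : (0,∞) → ℝ` be continuous and strictly monotone (increasing or decreasing), with a
left inverse `ψinv` on `(0,∞)`. If the two-point quasi-arithmetic mean generated by `ψ` is
homogeneous, i.e. for all `y₁, y₂ > 0`, `w ∈ [0,1]`, `k > 0`,
`ψ⁻¹(w ψ(k y₁) + (1−w) ψ(k y₂)) = k ψ⁻¹(w ψ(y₁) + (1−w) ψ(y₂))`,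
then there are `c ≠ 0` and `d` with either `ψ y = c y^φ + d` on `(0,∞)` for some `φ ≠ 0`,
or `ψ y = c log y + d` on `(0,∞)`. -/
theorem stmt8 (ψ ψinv : ℝ → ℝ)
    (hcont : ContinuousOn ψ (Set.Ioi 0))
    (hmono : StrictMonoOn ψ (Set.Ioi 0) ∨ StrictAntiOn ψ (Set.Ioi 0))
    (hinv : ∀ y : ℝ, 0 < y → ψinv (ψ y) = y)
    (hhom : ∀ y₁ : ℝ, 0 < y₁ → ∀ y₂ : ℝ, 0 < y₂ →
      ∀ w : ℝ, w ∈ Set.Icc (0:ℝ) 1 → ∀ k : ℝ, 0 < k →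
      ψinv (w * ψ (k * y₁) + (1 - w) * ψ (k * y₂))
        = k * ψinv (w * ψ y₁ + (1 - w) * ψ y₂)) :
    ∃ c : ℝ, c ≠ 0 ∧ ∃ d : ℝ,
      (∃ φ : ℝ, φ ≠ 0 ∧ ∀ y : ℝ, 0 < y → ψ y = c * y ^ φ + d)
      ∨ (∀ y : ℝ, 0 < y → ψ y = c * Real.log y + d) :=
  stmt8_general ψ ψinv hcont hinv hhom
end

section
/- Under the heterogeneous elasticity model with the stated integrability for φ = 1, write ε₀ = E[ε] and ε̃ = ε − ε₀. Then: (i) the value of the arithmetic–geometric wedge at x = 1 is ε_1(1) − ε₀ = E[exp(a)·ε̃] / E[exp(a)]; and (ii) the derivative of ε_1 with respect to log x at x = 1 equals the exp(a)-weighted variance of ε̃, namely d ε_1(x)/d(log x)|_{x=1} = E[exp(a)·ε̃²]/E[exp(a)] − ( E[exp(a)·ε̃]/E[exp(a)] )², which is nonnegative, and is strictly positive whenever ε is not almost surely constant. -/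
open MeasureTheory Real

/-- The arithmetic-mean elasticity as a function of `t = log x`:
`F(t) = E[ε·exp(a + ε t)] / E[exp(a + ε t)]`, i.e. `ε_1(x) = F(log x)`. -/
noncomputable def arithElas {Ω : Type*} [MeasurableSpace Ω] (μ : Measure Ω)
    (a e : Ω → ℝ) (t : ℝ) : ℝ :=
  (∫ ω, e ω * Real.exp (a ω + e ω * t) ∂μ) / (∫ ω, Real.exp (a ω + e ω * t) ∂μ)

/-- The `exp(a)`-weighted variance of `ε̃ = ε − E[ε]`. -/
noncomputable def wtdVar {Ω : Type*} [MeasurableSpace Ω] (μ : Measure Ω)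
    (a e : Ω → ℝ) : ℝ :=
  (∫ ω, Real.exp (a ω) * (e ω - ∫ ω', e ω' ∂μ) ^ 2 ∂μ) / (∫ ω, Real.exp (a ω) ∂μ)
    - ((∫ ω, Real.exp (a ω) * (e ω - ∫ ω', e ω' ∂μ) ∂μ) / (∫ ω, Real.exp (a ω) ∂μ)) ^ 2

/- The tilted moments `∫ e^k exp(a + e t)` (k ≤ 2) are dominated, locally uniformly in `t`, by
`(1 + e²)(exp(a + (t₀+1)e) + exp(a + (t₀-1)e))`, so one may differentiate under the integral sign:
the derivative of the `k`-th tilted moment is the `(k+1)`-st. The quotient rule then gives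
`d/dt (M₁/M₀) = M₂/M₀ - (M₁/M₀)²`, the variance of `e` under the tilted weights, and at `t = 0`
this is the `exp a`-weighted variance, which is invariant under recentring `e`. Writing it as
`∫ exp a · (e - c)² / ∫ exp a` shows it is nonnegative and vanishes only if `e = c` a.e. -/

lemma abs_pow_le_one_add_sq (x : ℝ) {k : ℕ} (hk : k ≤ 2) : |x ^ k| ≤ 1 + x ^ 2 := by
  rw [abs_pow]
  interval_cases k <;> nlinarith [sq_abs x, abs_nonneg x, sq_nonneg (|x| - 1)]

lemma exp_mul_le_exp_add_exp_neg (x : ℝ) {s : ℝ} (hs : |s| ≤ 1) :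
    exp (x * s) ≤ exp x + exp (-x) := calc
  exp (x * s) ≤ exp |x| := exp_le_exp.mpr <| calc
    x * s ≤ |x| * |s| := (le_abs_self _).trans (abs_mul x s).le
    _ ≤ |x| := mul_le_of_le_one_right (abs_nonneg x) hs
  _ ≤ exp x + exp (-x) := exp_abs_le x

section TiltedMoments

variable {Ω : Type*} [MeasurableSpace Ω] {μ : Measure Ω} {a e : Ω → ℝ}

lemma integrable_pow_mul_exp (ha : Measurable a) (he : Measurable e)
    (hMom : ∀ t : ℝ, Integrable (fun ω => (1 + e ω ^ 2) * exp (a ω + t * e ω)) μ)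
    {k : ℕ} (hk : k ≤ 2) (t : ℝ) :
    Integrable (fun ω => e ω ^ k * exp (a ω + e ω * t)) μ := by
  refine (hMom t).mono (by fun_prop) (ae_of_all _ fun ω => ?_)
  rw [norm_mul, norm_mul, mul_comm (e ω) t]
  gcongr
  exact (abs_pow_le_one_add_sq (e ω) hk).trans (le_abs_self _)

lemma exp_add_mul_le_of_abs_sub_le (x y : ℝ) {t t₀ : ℝ} (ht : |t - t₀| ≤ 1) :
    exp (x + y * t) ≤ exp (x + (t₀ + 1) * y) + exp (x + (t₀ - 1) * y) := calc
  exp (x + y * t) = exp (x + t₀ * y) * exp (y * (t - t₀)) := by rw [← exp_add]; congr 1; ring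
  _ ≤ exp (x + t₀ * y) * (exp y + exp (-y)) := by gcongr; exact exp_mul_le_exp_add_exp_neg y ht
  _ = exp (x + (t₀ + 1) * y) + exp (x + (t₀ - 1) * y) := by
    rw [mul_add, ← exp_add, ← exp_add]; congr 2 <;> ring

lemma hasDerivAt_integral_pow_mul_exp (ha : Measurable a) (he : Measurable e)
    (hMom : ∀ t : ℝ, Integrable (fun ω => (1 + e ω ^ 2) * exp (a ω + t * e ω)) μ)
    {k : ℕ} (hk : k ≤ 1) (t₀ : ℝ) :
    HasDerivAt (fun t => ∫ ω, e ω ^ k * exp (a ω + e ω * t) ∂μ)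
      (∫ ω, e ω ^ (k + 1) * exp (a ω + e ω * t₀) ∂μ) t₀ := by
  have hderiv : ∀ ω t, HasDerivAt (fun t => e ω ^ k * exp (a ω + e ω * t))
      (e ω ^ (k + 1) * exp (a ω + e ω * t)) t := fun ω t =>
    ((((hasDerivAt_id t).const_mul (e ω)).const_add (a ω)).exp.const_mul (e ω ^ k)).congr_deriv
      (by simp only [id, mul_one, pow_succ]; ring)
  have hbound : ∀ ω, ∀ t ∈ Metric.ball t₀ 1, ‖e ω ^ (k + 1) * exp (a ω + e ω * t)‖ ≤
      (1 + e ω ^ 2) * exp (a ω + (t₀ + 1) * e ω) + (1 + e ω ^ 2) * exp (a ω + (t₀ - 1) * e ω) :=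
    fun ω t ht => by
    rw [norm_mul, norm_of_nonneg (exp_pos _).le, ← mul_add]
    gcongr
    · exact abs_pow_le_one_add_sq (e ω) (by omega)
    · exact exp_add_mul_le_of_abs_sub_le _ _ (Metric.mem_ball.mp ht).le
  exact (hasDerivAt_integral_of_dominated_loc_of_deriv_le (Metric.ball_mem_nhds t₀ one_pos)
    (Filter.Eventually.of_forall fun t =>
      (integrable_pow_mul_exp ha he hMom (by omega) t).aestronglyMeasurable)
    (integrable_pow_mul_exp ha he hMom (by omega) t₀)
    (integrable_pow_mul_exp ha he hMom (by omega) t₀).aestronglyMeasurable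
    (ae_of_all _ hbound) ((hMom _).add (hMom _))
    (ae_of_all _ fun ω t _ => hderiv ω t)).2

lemma hasDerivAt_arithElas [NeZero μ] (ha : Measurable a) (he : Measurable e)
    (hMom : ∀ t : ℝ, Integrable (fun ω => (1 + e ω ^ 2) * exp (a ω + t * e ω)) μ) (t₀ : ℝ) :
    HasDerivAt (arithElas μ a e)
      ((∫ ω, e ω ^ 2 * exp (a ω + e ω * t₀) ∂μ) / (∫ ω, exp (a ω + e ω * t₀) ∂μ)
        - ((∫ ω, e ω * exp (a ω + e ω * t₀) ∂μ) / (∫ ω, exp (a ω + e ω * t₀) ∂μ)) ^ 2) t₀ := by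
  have hM₁ := hasDerivAt_integral_pow_mul_exp ha he hMom (k := 1) le_rfl t₀
  have hM₀ := hasDerivAt_integral_pow_mul_exp ha he hMom (k := 0) zero_le_one t₀
  have hpos : 0 < ∫ ω, exp (a ω + e ω * t₀) ∂μ :=
    integral_exp_pos (by simpa using integrable_pow_mul_exp ha he hMom (k := 0) (by omega) t₀)
  simp only [pow_zero, one_mul, pow_one, zero_add, one_add_one_eq_two] at hM₁ hM₀
  refine (hM₁.div hM₀ hpos.ne').congr_deriv ?_
  generalize (∫ ω, e ω ^ 2 * exp (a ω + e ω * t₀) ∂μ) = M₂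
  generalize (∫ ω, e ω * exp (a ω + e ω * t₀) ∂μ) = M₁
  generalize (∫ ω, exp (a ω + e ω * t₀) ∂μ) = M₀ at hpos ⊢
  field_simp

end TiltedMoments

section WeightedVariance

variable {Ω : Type*} [MeasurableSpace Ω] {μ : Measure Ω} {w e : Ω → ℝ}

lemma integral_mul_sub (hw : Integrable w μ) (hwe : Integrable (fun ω => w ω * e ω) μ) (c : ℝ) :
    ∫ ω, w ω * (e ω - c) ∂μ = (∫ ω, w ω * e ω ∂μ) - c * ∫ ω, w ω ∂μ := by
  simp only [mul_sub]
  rw [integral_sub hwe (hw.mul_const c), integral_mul_const, mul_comm]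

lemma integrable_mul_sub_sq (hw : Integrable w μ) (hwe : Integrable (fun ω => w ω * e ω) μ)
    (hwe2 : Integrable (fun ω => w ω * e ω ^ 2) μ) (c : ℝ) :
    Integrable (fun ω => w ω * (e ω - c) ^ 2) μ :=
  ((hwe2.sub (hwe.const_mul (2 * c))).add (hw.const_mul (c ^ 2))).congr
    (ae_of_all _ fun ω => by simp only [Pi.add_apply, Pi.sub_apply]; ring)

lemma integral_mul_sub_sq (hw : Integrable w μ) (hwe : Integrable (fun ω => w ω * e ω) μ)
    (hwe2 : Integrable (fun ω => w ω * e ω ^ 2) μ) (c : ℝ) :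
    ∫ ω, w ω * (e ω - c) ^ 2 ∂μ
      = (∫ ω, w ω * e ω ^ 2 ∂μ) - 2 * c * (∫ ω, w ω * e ω ∂μ) + c ^ 2 * ∫ ω, w ω ∂μ := by
  have hexpand : (fun ω => w ω * (e ω - c) ^ 2)
      = fun ω => w ω * e ω ^ 2 - 2 * c * (w ω * e ω) + c ^ 2 * w ω := by
    funext ω; ring
  have hint : Integrable (fun ω => w ω * e ω ^ 2 - 2 * c * (w ω * e ω)) μ :=
    hwe2.sub (hwe.const_mul _)
  rw [hexpand, integral_add hint (hw.const_mul _),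
    integral_sub hwe2 (hwe.const_mul _), integral_const_mul, integral_const_mul]

end WeightedVariance

section WtdVar

variable {Ω : Type*} [MeasurableSpace Ω] {μ : Measure Ω} [NeZero μ] {a e : Ω → ℝ}

lemma wtdVar_eq_sub_sq (hw : Integrable (fun ω => exp (a ω)) μ)
    (hwe : Integrable (fun ω => exp (a ω) * e ω) μ)
    (hwe2 : Integrable (fun ω => exp (a ω) * e ω ^ 2) μ) :
    wtdVar μ a e = (∫ ω, exp (a ω) * e ω ^ 2 ∂μ) / (∫ ω, exp (a ω) ∂μ)
      - ((∫ ω, exp (a ω) * e ω ∂μ) / (∫ ω, exp (a ω) ∂μ)) ^ 2 := by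
  have hD := (integral_exp_pos hw).ne'
  rw [wtdVar, integral_mul_sub_sq hw hwe hwe2, integral_mul_sub hw hwe]
  generalize (∫ ω, exp (a ω) * e ω ^ 2 ∂μ) = M₂
  generalize (∫ ω, exp (a ω) * e ω ∂μ) = M₁
  generalize (∫ ω, exp (a ω) ∂μ) = M₀ at hD ⊢
  field_simp
  ring

lemma wtdVar_eq_integral_sq_div (hw : Integrable (fun ω => exp (a ω)) μ)
    (hwe : Integrable (fun ω => exp (a ω) * e ω) μ)
    (hwe2 : Integrable (fun ω => exp (a ω) * e ω ^ 2) μ) :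
    wtdVar μ a e = (∫ ω, exp (a ω) *
      (e ω - (∫ ω', exp (a ω') * e ω' ∂μ) / (∫ ω', exp (a ω') ∂μ)) ^ 2 ∂μ)
      / (∫ ω, exp (a ω) ∂μ) := by
  have hD := (integral_exp_pos hw).ne'
  rw [wtdVar_eq_sub_sq hw hwe hwe2, integral_mul_sub_sq hw hwe hwe2]
  generalize (∫ ω, exp (a ω) * e ω ^ 2 ∂μ) = M₂
  generalize (∫ ω, exp (a ω) * e ω ∂μ) = M₁
  generalize (∫ ω, exp (a ω) ∂μ) = M₀ at hD ⊢
  field_simp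
  ring

lemma wtdVar_nonneg (hw : Integrable (fun ω => exp (a ω)) μ)
    (hwe : Integrable (fun ω => exp (a ω) * e ω) μ)
    (hwe2 : Integrable (fun ω => exp (a ω) * e ω ^ 2) μ) :
    0 ≤ wtdVar μ a e := by
  rw [wtdVar_eq_integral_sq_div hw hwe hwe2]
  exact div_nonneg (integral_nonneg fun ω => by positivity) (integral_exp_pos hw).le

lemma wtdVar_pos (hw : Integrable (fun ω => exp (a ω)) μ)
    (hwe : Integrable (fun ω => exp (a ω) * e ω) μ)
    (hwe2 : Integrable (fun ω => exp (a ω) * e ω ^ 2) μ)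
    (hne : ¬ ∃ c : ℝ, ∀ᵐ ω ∂μ, e ω = c) :
    0 < wtdVar μ a e := by
  set c := (∫ ω, exp (a ω) * e ω ∂μ) / (∫ ω, exp (a ω) ∂μ)
  rw [wtdVar_eq_integral_sq_div hw hwe hwe2]
  refine div_pos ((integral_nonneg fun ω => by positivity).lt_of_ne fun hzero => hne ⟨c, ?_⟩)
    (integral_exp_pos hw)
  have hsq_ae := (integral_eq_zero_iff_of_nonneg (fun ω => by positivity)
    (integrable_mul_sub_sq hw hwe hwe2 c)).mp hzero.symm
  filter_upwards [hsq_ae] with ω hω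
  have : (e ω - c) ^ 2 = 0 := (mul_eq_zero.mp hω).resolve_left (exp_pos _).ne'
  linarith [pow_eq_zero_iff (n := 2) two_ne_zero |>.mp this]

end WtdVar

theorem stmt9_general
    {Ω : Type*} [MeasurableSpace Ω] (μ : Measure Ω) [IsProbabilityMeasure μ]
    (a e : Ω → ℝ) (ha : Measurable a) (he : Measurable e)
    (hMom : ∀ t : ℝ, Integrable (fun ω => (1 + e ω ^ 2) * Real.exp (a ω + t * e ω)) μ) :
    (arithElas μ a e (Real.log 1) - (∫ ω, e ω ∂μ)
      = (∫ ω, Real.exp (a ω) * (e ω - ∫ ω', e ω' ∂μ) ∂μ) / (∫ ω, Real.exp (a ω) ∂μ))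
    ∧ HasDerivAt (fun t : ℝ => arithElas μ a e t) (wtdVar μ a e) 0
    ∧ 0 ≤ wtdVar μ a e
    ∧ ((¬ ∃ c : ℝ, ∀ᵐ ω ∂μ, e ω = c) → 0 < wtdVar μ a e) := by
  have hmom₀ : ∀ k ≤ 2, Integrable (fun ω => exp (a ω) * e ω ^ k) μ := fun k hk => by
    simpa only [mul_zero, add_zero, mul_comm] using integrable_pow_mul_exp ha he hMom hk 0
  have hw : Integrable (fun ω => exp (a ω)) μ := by simpa using hmom₀ 0 (by norm_num)
  have hwe : Integrable (fun ω => exp (a ω) * e ω) μ := by simpa using hmom₀ 1 (by norm_num)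
  have hwe2 := hmom₀ 2 le_rfl
  refine ⟨?_, ?_, wtdVar_nonneg hw hwe hwe2, wtdVar_pos hw hwe hwe2⟩
  · rw [integral_mul_sub hw hwe, arithElas, log_one]
    simp only [zero_mul, add_zero, mul_comm (e _)]
    field_simp [(integral_exp_pos hw).ne']
  · rw [wtdVar_eq_sub_sq hw hwe hwe2]
    simpa only [mul_zero, zero_mul, add_zero, mul_comm (e _), mul_comm (e _ ^ 2)]
      using hasDerivAt_arithElas ha he hMom 0

/-- first-order expansion of the arithmetic–geometric wedge at `x = 1`.
(i) `ε_1(1) − ε₀ = E[exp(a)·ε̃]/E[exp(a)]`; (ii) the derivative of `ε_1` with respect to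
`log x` at `x = 1` (i.e. at `t = 0`) equals the `exp(a)`-weighted variance of `ε̃`, which is
nonnegative, and strictly positive whenever `ε` is not a.s. constant. -/
theorem stmt9
    {Ω : Type*} [MeasurableSpace Ω] (μ : Measure Ω) [IsProbabilityMeasure μ]
    (a e : Ω → ℝ) (ha : Measurable a) (he : Measurable e)
    (hInta : Integrable a μ) (hInte : Integrable e μ)
    (hMom : ∀ t : ℝ, Integrable (fun ω => (1 + e ω ^ 2) * Real.exp (a ω + t * e ω)) μ) :
    (arithElas μ a e (Real.log 1) - (∫ ω, e ω ∂μ)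
      = (∫ ω, Real.exp (a ω) * (e ω - ∫ ω', e ω' ∂μ) ∂μ) / (∫ ω, Real.exp (a ω) ∂μ))
    ∧ HasDerivAt (fun t : ℝ => arithElas μ a e t) (wtdVar μ a e) 0
    ∧ 0 ≤ wtdVar μ a e
    ∧ ((¬ ∃ c : ℝ, ∀ᵐ ω ∂μ, e ω = c) → 0 < wtdVar μ a e) :=
  stmt9_general μ a e ha he hMom
end

section
/- Fix β₀ ∈ ℝ, σ > 0 and p ∈ (0,1). Consider two models of (log Y, X) with X ∈ {0,1} Bernoulli(p). Model A: ε ≡ β₀ is constant, and conditionally on X = 0 the intercept a is N(0,1) while conditionally on X = 1 it is N(0, 1+σ²), with log Y = a + ε·X. Model B: (a, ε) are independent of X and of each other, a ~ N(0,1), ε ~ N(β₀, σ²), and log Y = a + ε·X. Then the joint distribution of (log Y, X) is the same in both models — conditionally on X = 0 it is N(0,1) and conditionally on X = 1 it is N(β₀, 1+σ²) — yet the arithmetic mean semi-elasticities differ: θ_A(x) := E_A[ε·e^{a+εx}]/E_A[e^{a+εx}] = β₀ for all x, while θ_B(x) = β₀ + σ²·x, so θ_A(x) ≠ θ_B(x)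 for every x ≠ 0. -/
/-!
Conditioning on `X` shows that both models give `log Y` the law `N(0,1)` on `{X = 0}` and
`N(β₀, 1 + σ²)` on `{X = 1}` (in model B, `a + ε` is a sum of independent Gaussians), and a
binary `X` together with these two conditional laws determines the joint law of `(log Y, X)`.
The semi-elasticity, however, depends on the joint law of `(a, ε)`, which the data do not reveal.
In model A the slope is constant, so `θ_A ≡ β₀`. In model B independence factors `E[e^a]` out of
numerator and denominator, leaving `E[ε e^{xε}] / E[e^{xε}]`, the derivative at `x` of the
cumulant generating function of `ε`, which is `β₀ + σ² x` for `ε ~ N(β₀, σ²)`.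
-/

open MeasureTheory ProbabilityTheory Real

open scoped NNReal

noncomputable def meanSemiElasticity {Ω : Type*} [MeasurableSpace Ω] (μ : Measure Ω)
    (a ε : Ω → ℝ) (x : ℝ) : ℝ :=
  (∫ ω, ε ω * exp (a ω + ε ω * x) ∂μ) / ∫ ω, exp (a ω + ε ω * x) ∂μ

section Conditioning

variable {Ω β γ : Type*} [MeasurableSpace Ω] [MeasurableSpace β] [MeasurableSpace γ]
  {μ : Measure Ω}

lemma smul_cond_add_smul_cond_compl [IsFiniteMeasure μ] {s : Set Ω} (hs : MeasurableSet s) :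
    μ s • μ[|s] + μ sᶜ • μ[|sᶜ] = μ := by
  ext t
  simp only [Measure.add_apply, Measure.smul_apply, smul_eq_mul, mul_comm (μ s), mul_comm (μ sᶜ)]
  exact cond_add_cond_compl_eq hs μ

lemma integrable_of_integrable_cond_of_integrable_cond_compl [IsFiniteMeasure μ] {s : Set Ω}
    (hs : MeasurableSet s) {f : Ω → ℝ} (h : Integrable f μ[|s]) (hc : Integrable f μ[|sᶜ]) :
    Integrable f μ := by
  rw [← smul_cond_add_smul_cond_compl (μ := μ) hs]
  exact (h.smul_measure (measure_ne_top _ _)).add_measure (hc.smul_measure (measure_ne_top _ _))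

lemma map_cond_preimage_singleton_congr [MeasurableSingletonClass β] {X : Ω → β}
    (hX : Measurable X) (f : Ω → β → γ) (c : β) :
    (μ[|X ⁻¹' {c}]).map (fun ω => f ω (X ω)) = (μ[|X ⁻¹' {c}]).map (fun ω => f ω c) :=
  Measure.map_congr <| (ae_cond_mem (hX (measurableSet_singleton c))).mono
    fun ω hω => congrArg (f ω) hω

lemma ProbabilityTheory.IndepFun.map_cond_preimage_eq_map [IsFiniteMeasure μ] {Z : Ω → γ}
    {X : Ω → β} (hind : IndepFun Z X μ) (hZ : Measurable Z) (hX : Measurable X) {t : Set β}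
    (ht : MeasurableSet t) (h0 : μ (X ⁻¹' t) ≠ 0) :
    (μ[|X ⁻¹' t]).map Z = μ.map Z := by
  ext s hs
  rw [Measure.map_apply hZ hs, Measure.map_apply hZ hs, cond_apply (hX ht), Set.inter_comm,
    hind.measure_inter_preimage_eq_mul _ _ hs ht, mul_comm, mul_assoc,
    ENNReal.mul_inv_cancel h0 (measure_ne_top μ _), mul_one]

end Conditioning

lemma preimage_zero_eq_compl_preimage_one {Ω : Type*} {X : Ω → ℝ} (hX01 : ∀ ω, X ω = 0 ∨ X ω = 1) :
    X ⁻¹' {0} = (X ⁻¹' {1})ᶜ := by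
  ext ω
  rcases hX01 ω with h | h <;> simp [h]

section Regressor

variable {Ω γ : Type*} [MeasurableSpace Ω] [MeasurableSpace γ] {μ : Measure Ω} {X : Ω → ℝ}

lemma measure_preimage_zero_eq_one_sub [IsProbabilityMeasure μ] (hX : Measurable X)
    (hX01 : ∀ ω, X ω = 0 ∨ X ω = 1) : μ (X ⁻¹' {0}) = 1 - μ (X ⁻¹' {1}) := by
  rw [preimage_zero_eq_compl_preimage_one hX01,
    prob_compl_eq_one_sub (hX (measurableSet_singleton 1))]

lemma integrable_of_integrable_cond_of_binary [IsFiniteMeasure μ] (hX : Measurable X)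
    (hX01 : ∀ ω, X ω = 0 ∨ X ω = 1) {f : Ω → ℝ} (h0 : Integrable f μ[|X ⁻¹' {0}])
    (h1 : Integrable f μ[|X ⁻¹' {1}]) : Integrable f μ := by
  rw [preimage_zero_eq_compl_preimage_one hX01] at h0
  exact integrable_of_integrable_cond_of_integrable_cond_compl
    (hX (measurableSet_singleton 1)) h1 h0

lemma map_prodMk_eq_of_binary [IsFiniteMeasure μ] {L : Ω → γ} (hL : Measurable L)
    (hX : Measurable X) (hX01 : ∀ ω, X ω = 0 ∨ X ω = 1) :
    μ.map (fun ω => (L ω, X ω))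
      = μ (X ⁻¹' {1}) • ((μ[|X ⁻¹' {1}]).map L).map (fun y => (y, (1 : ℝ)))
        + μ (X ⁻¹' {0}) • ((μ[|X ⁻¹' {0}]).map L).map (fun y => (y, (0 : ℝ))) := by
  have hfiber (c : ℝ) : ((μ[|X ⁻¹' {c}]).map L).map (fun y => (y, c))
      = (μ[|X ⁻¹' {c}]).map (fun ω => (L ω, X ω)) := by
    rw [Measure.map_map (by fun_prop) hL,
      map_cond_preimage_singleton_congr hX (fun ω x => (L ω, x))]
    rfl
  conv_lhs => rw [← smul_cond_add_smul_cond_compl (μ := μ) (hX (measurableSet_singleton 1))]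
  rw [Measure.map_add _ _ (hL.prodMk hX), Measure.map_smul, Measure.map_smul, hfiber, hfiber,
    preimage_zero_eq_compl_preimage_one hX01]

lemma map_prodMk_eq_of_cond_eq {Ω' : Type*} [MeasurableSpace Ω'] [IsProbabilityMeasure μ]
    {ν : Measure Ω'} [IsProbabilityMeasure ν] {L : Ω → γ} {M : Ω' → γ} {Y : Ω' → ℝ}
    (hL : Measurable L) (hX : Measurable X) (hM : Measurable M) (hY : Measurable Y)
    (hX01 : ∀ ω, X ω = 0 ∨ X ω = 1) (hY01 : ∀ ω, Y ω = 0 ∨ Y ω = 1)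
    (h1 : μ (X ⁻¹' {1}) = ν (Y ⁻¹' {1}))
    (hlaw0 : (μ[|X ⁻¹' {0}]).map L = (ν[|Y ⁻¹' {0}]).map M)
    (hlaw1 : (μ[|X ⁻¹' {1}]).map L = (ν[|Y ⁻¹' {1}]).map M) :
    μ.map (fun ω => (L ω, X ω)) = ν.map (fun ω => (M ω, Y ω)) := by
  have h0 : μ (X ⁻¹' {0}) = ν (Y ⁻¹' {0}) := by
    rw [measure_preimage_zero_eq_one_sub hX hX01, measure_preimage_zero_eq_one_sub hY hY01, h1]
  rw [map_prodMk_eq_of_binary hL hX hX01, map_prodMk_eq_of_binary hM hY hY01, h0, h1, hlaw0, hlaw1]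

lemma map_add_const_mul_cond_preimage_singleton {a : Ω → ℝ} (ha : Measurable a)
    (hX : Measurable X) (b c : ℝ) :
    (μ[|X ⁻¹' {c}]).map (fun ω => a ω + b * X ω) = ((μ[|X ⁻¹' {c}]).map a).map (· + b * c) := by
  rw [map_cond_preimage_singleton_congr hX (fun ω x => a ω + b * x),
    Measure.map_map (by fun_prop) ha]
  rfl

lemma ProbabilityTheory.IndepFun.map_add_mul_cond_preimage_singleton [IsFiniteMeasure μ]
    {a ε : Ω → ℝ} (hind : IndepFun (fun ω => (a ω, ε ω)) X μ) (ha : Measurable a) (hε : Measurable ε)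
    (hX : Measurable X) (c : ℝ) (h0 : μ (X ⁻¹' {c}) ≠ 0) :
    (μ[|X ⁻¹' {c}]).map (fun ω => a ω + ε ω * X ω) = μ.map (fun ω => a ω + ε ω * c) := by
  rw [map_cond_preimage_singleton_congr hX (fun ω x => a ω + ε ω * x)]
  exact (hind.comp (φ := fun q : ℝ × ℝ => q.1 + q.2 * c) (by fun_prop) measurable_id
    ).map_cond_preimage_eq_map (by fun_prop) hX (measurableSet_singleton c) h0

end Regressor

section Gaussian

variable {Ω : Type*} [MeasurableSpace Ω] {μ : Measure Ω} {X : Ω → ℝ} {m : ℝ} {v : ℝ≥0}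

lemma integrable_exp_mul_of_map_eq_gaussianReal (hX : μ.map X = gaussianReal m v) (t : ℝ) :
    Integrable (fun ω => exp (t * X ω)) μ := by
  have : NeZero μ := ⟨fun h0 => by simpa [h0] using congrArg (· Set.univ) hX⟩
  rw [← mgf_pos_iff, mgf_gaussianReal hX]
  exact exp_pos _

lemma integrableExpSet_eq_univ_of_map_eq_gaussianReal (hX : μ.map X = gaussianReal m v) :
    integrableExpSet X μ = Set.univ :=
  Set.eq_univ_of_forall (integrable_exp_mul_of_map_eq_gaussianReal hX)

lemma integrable_exp_of_map_eq_gaussianReal (hX : μ.map X = gaussianReal m v) :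
    Integrable (fun ω => exp (X ω)) μ := by
  simpa using integrable_exp_mul_of_map_eq_gaussianReal hX 1

lemma deriv_cgf_of_map_eq_gaussianReal (hX : μ.map X = gaussianReal m v) (x : ℝ) :
    deriv (cgf X μ) x = m + v * x := by
  rw [show cgf X μ = fun t => m * t + v * t ^ 2 / 2 from funext (cgf_gaussianReal hX)]
  have h := ((hasDerivAt_id' x).const_mul m).fun_add
    (((hasDerivAt_pow 2 x).const_mul (v : ℝ)).div_const 2)
  rw [h.deriv]
  norm_num
  ring

end Gaussian

section SemiElasticity

variable {Ω : Type*} [MeasurableSpace Ω] {μ : Measure Ω} {a ε : Ω → ℝ}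

lemma meanSemiElasticity_const [NeZero μ] (ha : Integrable (fun ω => exp (a ω)) μ) (b x : ℝ) :
    meanSemiElasticity μ a (fun _ => b) x = b := by
  have hpos : 0 < ∫ ω, exp (a ω + b * x) ∂μ :=
    integral_exp_pos (by simpa only [exp_add] using ha.mul_const (exp (b * x)))
  rw [meanSemiElasticity, integral_const_mul, mul_div_assoc, div_self hpos.ne', mul_one]

lemma ProbabilityTheory.IndepFun.meanSemiElasticity_eq_deriv_cgf [NeZero μ] (hind : IndepFun a ε μ)
    (ha : Measurable a) (hε : Measurable ε) (ha_exp : Integrable (fun ω => exp (a ω)) μ) {x : ℝ}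
    (hx : x ∈ interior (integrableExpSet ε μ)) :
    meanSemiElasticity μ a ε x = deriv (cgf ε μ) x := by
  have hfactor (h : ℝ → ℝ) (hh : Measurable h) :
      ∫ ω, exp (a ω) * h (ε ω) ∂μ = (∫ ω, exp (a ω) ∂μ) * ∫ ω, h (ε ω) ∂μ :=
    (hind.comp measurable_exp hh).integral_fun_mul_eq_mul_integral
      (by fun_prop) (hh.comp hε).aestronglyMeasurable
  have hnum : ∫ ω, ε ω * exp (a ω + ε ω * x) ∂μ
      = (∫ ω, exp (a ω) ∂μ) * ∫ ω, ε ω * exp (x * ε ω) ∂μ := by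
    rw [← hfactor (fun y => y * exp (x * y)) (by fun_prop)]
    congr 1 with ω
    rw [exp_add, mul_comm x]
    ring
  have hden : ∫ ω, exp (a ω + ε ω * x) ∂μ = (∫ ω, exp (a ω) ∂μ) * mgf ε μ x := by
    rw [mgf, ← hfactor (fun y => exp (x * y)) (by fun_prop)]
    congr 1 with ω
    rw [exp_add, mul_comm x]
  rw [meanSemiElasticity, hnum, hden, mul_div_mul_left _ _ (integral_exp_pos ha_exp).ne',
    deriv_cgf hx]

end SemiElasticity

/-- observational equivalence under standard IV-type moment restrictions.
Model A: `ε ≡ β₀` constant, `X` Bernoulli(`p`), `a | X=0 ~ N(0,1)`, `a | X=1 ~ N(0,1+σ²)`,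
`log Y = a + ε X`. Model B: `(a, ε, X)` mutually independent, `a ~ N(0,1)`,
`ε ~ N(β₀, σ²)`, `X` Bernoulli(`p`), `log Y = a + ε X`. Then `(log Y, X)` has the same joint
distribution in both models — conditionally on `X = 0` it is `N(0,1)` and conditionally on
`X = 1` it is `N(β₀, 1+σ²)` — yet the arithmetic mean semi-elasticities differ:
`θ_A(x) = β₀` for all `x` while `θ_B(x) = β₀ + σ² x`, so `θ_A(x) ≠ θ_B(x)` for all `x ≠ 0`. -/
theorem stmt11
    {ΩA : Type*} [MeasurableSpace ΩA] (μA : Measure ΩA) [IsProbabilityMeasure μA]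
    {ΩB : Type*} [MeasurableSpace ΩB] (μB : Measure ΩB) [IsProbabilityMeasure μB]
    (β₀ σ p : ℝ) (hσ : 0 < σ) (hp : p ∈ Set.Ioo (0:ℝ) 1)
    (aA XA : ΩA → ℝ) (haA : Measurable aA) (hXA : Measurable XA)
    (hXAbin : ∀ ω, XA ω = 0 ∨ XA ω = 1)
    (hXAp : μA (XA ⁻¹' {1}) = ENNReal.ofReal p)
    (hA0 : Measure.map aA (μA[|XA ⁻¹' {0}]) = gaussianReal 0 1)
    (hA1 : Measure.map aA (μA[|XA ⁻¹' {1}])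
        = gaussianReal 0 (Real.toNNReal (1 + σ ^ 2)))
    (aB eB XB : ΩB → ℝ) (haB : Measurable aB) (heB : Measurable eB) (hXB : Measurable XB)
    (hXBbin : ∀ ω, XB ω = 0 ∨ XB ω = 1)
    (hXBp : μB (XB ⁻¹' {1}) = ENNReal.ofReal p)
    (hindB : iIndepFun
        ![aB, eB, XB] μB)
    (hlawaB : Measure.map aB μB = gaussianReal 0 1)
    (hlaweB : Measure.map eB μB = gaussianReal β₀ (Real.toNNReal (σ ^ 2))) :
    -- same joint distribution of (log Y, X) in the two models
    (Measure.map (fun ω => (aA ω + β₀ * XA ω, XA ω)) μA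
      = Measure.map (fun ω => (aB ω + eB ω * XB ω, XB ω)) μB)
    -- conditional laws: N(0,1) given X = 0 and N(β₀, 1+σ²) given X = 1, in both models
    ∧ Measure.map (fun ω => aA ω + β₀ * XA ω) (μA[|XA ⁻¹' {0}]) = gaussianReal 0 1
    ∧ Measure.map (fun ω => aA ω + β₀ * XA ω) (μA[|XA ⁻¹' {1}])
        = gaussianReal β₀ (Real.toNNReal (1 + σ ^ 2))
    ∧ Measure.map (fun ω => aB ω + eB ω * XB ω) (μB[|XB ⁻¹' {0}]) = gaussianReal 0 1
    ∧ Measure.map (fun ω => aB ω + eB ω * XB ω) (μB[|XB ⁻¹' {1}])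
        = gaussianReal β₀ (Real.toNNReal (1 + σ ^ 2))
    -- θ_A(x) = β₀ for all x
    ∧ (∀ x : ℝ,
        (∫ ω, β₀ * Real.exp (aA ω + β₀ * x) ∂μA) / (∫ ω, Real.exp (aA ω + β₀ * x) ∂μA)
          = β₀)
    -- θ_B(x) = β₀ + σ²·x for all x
    ∧ (∀ x : ℝ,
        (∫ ω, eB ω * Real.exp (aB ω + eB ω * x) ∂μB)
            / (∫ ω, Real.exp (aB ω + eB ω * x) ∂μB)
          = β₀ + σ ^ 2 * x)
    -- θ_A(x) ≠ θ_B(x) for every x ≠ 0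
    ∧ (∀ x : ℝ, x ≠ 0 →
        (∫ ω, β₀ * Real.exp (aA ω + β₀ * x) ∂μA) / (∫ ω, Real.exp (aA ω + β₀ * x) ∂μA)
          ≠ (∫ ω, eB ω * Real.exp (aB ω + eB ω * x) ∂μB)
              / (∫ ω, Real.exp (aB ω + eB ω * x) ∂μB)) := by
  obtain ⟨hp0, hp1⟩ := hp
  have hB1 : μB (XB ⁻¹' {1}) ≠ 0 := by
    rw [hXBp]
    exact (ENNReal.ofReal_pos.mpr hp0).ne'
  have hB0 : μB (XB ⁻¹' {0}) ≠ 0 := by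
    rw [measure_preimage_zero_eq_one_sub hXB hXBbin, hXBp]
    exact (tsub_pos_of_lt (ENNReal.ofReal_lt_one.mpr hp1)).ne'
  have hae : IndepFun aB eB μB := hindB.indepFun (i := 0) (j := 1) (by decide)
  have haeX : IndepFun (fun ω => (aB ω, eB ω)) XB μB :=
    hindB.indepFun_prodMk (by intro i; fin_cases i <;> assumption) 0 1 2 (by decide) (by decide)
  have hA0' : (μA[|XA ⁻¹' {0}]).map (fun ω => aA ω + β₀ * XA ω) = gaussianReal 0 1 := by
    rw [map_add_const_mul_cond_preimage_singleton haA hXA, hA0, gaussianReal_map_add_const]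
    simp
  have hA1' : (μA[|XA ⁻¹' {1}]).map (fun ω => aA ω + β₀ * XA ω)
      = gaussianReal β₀ (1 + σ ^ 2).toNNReal := by
    rw [map_add_const_mul_cond_preimage_singleton haA hXA, hA1, gaussianReal_map_add_const]
    simp
  have hB0' : (μB[|XB ⁻¹' {0}]).map (fun ω => aB ω + eB ω * XB ω) = gaussianReal 0 1 := by
    rw [haeX.map_add_mul_cond_preimage_singleton haB heB hXB 0 hB0]
    simpa using hlawaB
  have hB1' : (μB[|XB ⁻¹' {1}]).map (fun ω => aB ω + eB ω * XB ω)
      = gaussianReal β₀ (1 + σ ^ 2).toNNReal := by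
    rw [haeX.map_add_mul_cond_preimage_singleton haB heB hXB 1 hB1, toNNReal_add zero_le_one
      (sq_nonneg σ), toNNReal_one, ← zero_add β₀]
    simp only [mul_one]
    exact gaussianReal_add_gaussianReal_of_indepFun hae hlawaB hlaweB
  have hθA (x : ℝ) : meanSemiElasticity μA aA (fun _ => β₀) x = β₀ :=
    meanSemiElasticity_const (integrable_of_integrable_cond_of_binary hXA hXAbin
      (integrable_exp_of_map_eq_gaussianReal hA0) (integrable_exp_of_map_eq_gaussianReal hA1)) β₀ x
  have hθB (x : ℝ) : meanSemiElasticity μB aB eB x = β₀ + σ ^ 2 * x := by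
    rw [hae.meanSemiElasticity_eq_deriv_cgf haB heB (integrable_exp_of_map_eq_gaussianReal hlawaB)
      (by simp [integrableExpSet_eq_univ_of_map_eq_gaussianReal hlaweB]),
      deriv_cgf_of_map_eq_gaussianReal hlaweB, coe_toNNReal _ (sq_nonneg σ)]
  refine ⟨map_prodMk_eq_of_cond_eq (by fun_prop) hXA (by fun_prop) hXB hXAbin hXBbin
    (hXAp.trans hXBp.symm) (hA0'.trans hB0'.symm) (hA1'.trans hB1'.symm),
    hA0', hA1', hB0', hB1', hθA, hθB, fun x hx => ?_⟩
  change meanSemiElasticity μA aA (fun _ => β₀) x ≠ meanSemiElasticity μB aB eB x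
  simp [hθA, hθB, hσ.ne', hx]
end

section
/- Let ρ ∈ C_c^∞(ℝ), let φ ∈ C_c^∞(ℝ) with ∫ φ = 0 and let Φ(ε) = ∫_{−∞}^{ε} φ(s) ds be its (compactly supported) antiderivative. Let p ∈ C_c^∞(ℝ) satisfy ∫ p(x) dx = 1 and ∫ x·p(x) dx = 0. For each x ∈ ℝ define n_x : ℝ² → ℝ by n_x(a, ε) = p(x)·( −x·ρ′(a)·Φ(ε) + ρ(a)·φ(ε) ). Then: (i) for every x and every ℓ ∈ ℝ, ∫_{ℝ} n_x(ℓ − s·x, s) ds = 0, so n_x lies in the null space of the Radon projection with slope x; and (ii) for every (a, ε) ∈ ℝ², ∫_{ℝ} n_x(a, ε) dx = ρ(a)·φ(ε). -/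
open Real MeasureTheory

/-- compactly supported null-space family for the Radon transform.
Given `ρ, φ ∈ C_c^∞(ℝ)` with `∫ φ = 0`, `Φ(ε) = ∫_{−∞}^{ε} φ`, and `p ∈ C_c^∞(ℝ)` with
`∫ p = 1`, `∫ x p(x) dx = 0`, define
`n_x(a, ε) = p(x)·(−x·ρ′(a)·Φ(ε) + ρ(a)·φ(ε))`. Then
(i) for every `x` and `ℓ`, `∫ n_x(ℓ − s x, s) ds = 0` (`n_x` lies in the null space of the
Radon projection with slope `x`), and (ii) `∫ n_x(a, ε) dx = ρ(a)·φ(ε)`. -/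
theorem stmt16 (ρ φ p : ℝ → ℝ)
    (hρ : ContDiff ℝ (⊤ : ℕ∞) ρ) (hρs : HasCompactSupport ρ)
    (hφ : ContDiff ℝ (⊤ : ℕ∞) φ) (hφs : HasCompactSupport φ)
    (hφint : (∫ s : ℝ, φ s) = 0)
    (hp : ContDiff ℝ (⊤ : ℕ∞) p) (hps : HasCompactSupport p)
    (hp1 : (∫ x : ℝ, p x) = 1) (hpx : (∫ x : ℝ, x * p x) = 0) :
    (∀ x ℓ : ℝ,
      (∫ s : ℝ, p x * (-x * deriv ρ (ℓ - s * x) * (∫ u in Set.Iic s, φ u)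
          + ρ (ℓ - s * x) * φ s)) = 0)
    ∧ (∀ a e : ℝ,
      (∫ x : ℝ, p x * (-x * deriv ρ a * (∫ u in Set.Iic e, φ u) + ρ a * φ e))
        = ρ a * φ e) := by
  have hφc : Continuous φ := hφ.continuous
  have hφi : Integrable φ := hφc.integrable_of_hasCompactSupport hφs
  set Φ : ℝ → ℝ := fun s => ∫ u in Set.Iic s, φ u with hΦdef
  -- derivative of Φ
  have hΦd : ∀ s : ℝ, HasDerivAt Φ (φ s) s := by
    intro s
    have h1 : ∀ t : ℝ, Φ t = Φ 0 + ∫ u in (0:ℝ)..t, φ u := by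
      intro t
      show (∫ u in Set.Iic t, φ u) = (∫ u in Set.Iic (0:ℝ), φ u) + ∫ u in (0:ℝ)..t, φ u
      rw [← intervalIntegral.integral_Iic_sub_Iic hφi.integrableOn hφi.integrableOn]
      ring
    have h2 : HasDerivAt (fun t => Φ 0 + ∫ u in (0:ℝ)..t, φ u) (φ s) s := by
      have := intervalIntegral.integral_hasDerivAt_right (a := (0:ℝ)) (b := s)
        hφi.intervalIntegrable
        hφc.stronglyMeasurable.stronglyMeasurableAtFilter
        hφc.continuousAt
      simpa using this.const_add (Φ 0)
    exact h2.congr_of_eventuallyEq (Filter.Eventually.of_forall h1)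
  -- compact support of Φ
  obtain ⟨R, hR⟩ : ∃ R : ℝ, tsupport φ ⊆ Set.Icc (-R) R := by
    obtain ⟨R, hR⟩ := hφs.isBounded.subset_closedBall 0
    refine ⟨R, fun u hu => ?_⟩
    have := hR hu
    simp only [Metric.mem_closedBall, Real.dist_eq, sub_zero] at this
    exact Set.mem_Icc.2 (abs_le.1 this)
  have hφzero : ∀ u : ℝ, u ∉ Set.Icc (-R) R → φ u = 0 := fun u hu =>
    image_eq_zero_of_notMem_tsupport fun h => hu (hR h)
  have hΦs : HasCompactSupport Φ := by
    apply HasCompactSupport.intro (isCompact_Icc (a := -R) (b := R))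
    intro s hs
    rcases lt_or_ge s (-R) with h | h
    · exact setIntegral_eq_zero_of_forall_eq_zero fun u hu =>
        hφzero u fun hm => absurd hm.1 (by simp only [Set.mem_Iic] at hu; linarith)
    · have hs' : R < s := by
        by_contra h2
        exact hs (Set.mem_Icc.2 ⟨h, le_of_not_gt h2⟩)
      have hIoi : (∫ u in Set.Ioi s, φ u) = 0 :=
        setIntegral_eq_zero_of_forall_eq_zero fun u hu =>
          hφzero u fun hm => absurd hm.2 (not_le.2 (lt_trans hs' hu))
      have hsplit := intervalIntegral.integral_Iic_add_Ioi (b := s)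
        (f := φ) (μ := volume) hφi.integrableOn hφi.integrableOn
      rw [hφint, hIoi] at hsplit
      show (∫ u in Set.Iic s, φ u) = 0
      linarith
  have hΦc : Continuous Φ := continuous_iff_continuousAt.2 fun s => (hΦd s).continuousAt
  have hΦcd : ContDiff ℝ 1 Φ := by
    rw [contDiff_one_iff_deriv]
    have hdΦ : deriv Φ = φ := funext fun s => (hΦd s).deriv
    exact ⟨fun s => (hΦd s).differentiableAt, hdΦ ▸ hφc⟩
  constructor
  · -- Part (i)
    intro x ℓ
    rw [MeasureTheory.integral_const_mul]
    have key : (∫ s : ℝ, (-x * deriv ρ (ℓ - s * x) * Φ s + ρ (ℓ - s * x) * φ s)) = 0 := by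
      set g : ℝ → ℝ := fun s => ρ (ℓ - s * x) * Φ s with hg
      have hinner : ∀ s : ℝ, HasDerivAt (fun t => ℓ - t * x) (-x) s := by
        intro s
        simpa using ((hasDerivAt_id s).mul_const x).const_sub ℓ
      have hcomp : ∀ s : ℝ, HasDerivAt (fun t => ρ (ℓ - t * x))
          (deriv ρ (ℓ - s * x) * (-x)) s := fun s =>
        ((hρ.differentiable (by simp) (ℓ - s * x)).hasDerivAt).comp s (hinner s)
      have hgd : ∀ s : ℝ, HasDerivAt g
          (-x * deriv ρ (ℓ - s * x) * Φ s + ρ (ℓ - s * x) * φ s) s := by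
        intro s
        have : HasDerivAt (fun y => ρ (ℓ - y * x) * Φ y)
          (deriv ρ (ℓ - s * x) * (-x) * Φ s + ρ (ℓ - s * x) * φ s) s := (hcomp s).mul (hΦd s)
        convert this using 1
        ring
      have hgderiv : deriv g = fun s =>
          -x * deriv ρ (ℓ - s * x) * Φ s + ρ (ℓ - s * x) * φ s :=
        funext fun s => (hgd s).deriv
      have hgcd : ContDiff ℝ 1 g := by
        have h1 : ContDiff ℝ 1 (fun t => ρ (ℓ - t * x)) :=
          (hρ.of_le (by simp)).comp (contDiff_const.sub (contDiff_id.mul contDiff_const))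
        exact h1.mul hΦcd
      have hgs : HasCompactSupport g := hΦs.mul_left
      have hdc : Continuous (deriv g) := by
        rw [hgderiv]
        exact ((continuous_const.mul ((hρ.continuous_deriv (by simp)).comp
          (continuous_const.sub (continuous_id.mul continuous_const)))).mul hΦc).add
          (((hρ.continuous).comp
            (continuous_const.sub (continuous_id.mul continuous_const))).mul hφc)
      have hdi : Integrable (deriv g) :=
        hdc.integrable_of_hasCompactSupport hgs.deriv
      have hsplit := intervalIntegral.integral_Iic_add_Ioi (b := (0:ℝ))
        (f := deriv g) (μ := volume) hdi.integrableOn hdi.integrableOn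
      have h1 := HasCompactSupport.integral_Iic_deriv_eq hgcd hgs 0
      have h2 := HasCompactSupport.integral_Ioi_deriv_eq hgcd hgs 0
      have : (∫ s : ℝ, deriv g s) = 0 := by
        rw [← hsplit, h1, h2]; ring
      rw [← this]
      exact integral_congr_ae (Filter.Eventually.of_forall fun s => by rw [hgderiv])
    rw [key, mul_zero]
  · -- Part (ii)
    intro a e
    have hpc : Continuous p := hp.continuous
    have hpi : Integrable p := hpc.integrable_of_hasCompactSupport hps
    have hxpi : Integrable (fun x : ℝ => x * p x) :=
      (continuous_id.mul hpc).integrable_of_hasCompactSupport hps.mul_left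
    have heq : ∀ x : ℝ, p x * (-x * deriv ρ a * Φ e + ρ a * φ e)
        = (-(deriv ρ a * Φ e)) * (x * p x) + (ρ a * φ e) * p x := fun x => by ring
    calc (∫ x : ℝ, p x * (-x * deriv ρ a * Φ e + ρ a * φ e))
        = ∫ x : ℝ, ((-(deriv ρ a * Φ e)) * (x * p x) + (ρ a * φ e) * p x) :=
          integral_congr_ae (Filter.Eventually.of_forall fun x => heq x)
      _ = (-(deriv ρ a * Φ e)) * (∫ x : ℝ, x * p x) + (ρ a * φ e) * (∫ x : ℝ, p x) := by
          rw [integral_add (hxpi.const_mul _) (hpi.const_mul _),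
            integral_const_mul, integral_const_mul]
      _ = ρ a * φ e := by rw [hpx, hp1]; ring
end

section
/- Let (y_i, x_i)_{i=1}^n be a finite sample with y_i > 0 and x_i ∈ {0,1}, and suppose both groups {i : x_i = 0} and {i : x_i = 1} are nonempty. Define the group arithmetic means ȳ_j = (1/|{i : x_i = j}|)·Σ_{i : x_i = j} y_i and the group log-means L_j = (1/|{i : x_i = j}|)·Σ_{i : x_i = j} log y_i for j ∈ {0,1}, and set β̂₁ = L₁ − L₀ (the OLS slope of log y on a constant and x). Then the smearing-corrected estimator satisfies the exact algebraic identity e^{β̂₁} · ( ȳ₁·e^{−L₁} ) / ( ȳ₀·e^{−L₀} ) − 1 = ȳ₁/ȳ₀ − 1. Since the PPML (Poisson pseudo-maximum-likelihood) estimates of the exponential model E[y|x] = e^{γ₀ + γ₁x} with binary x satisfy e^{γ̂₀} = ȳ₀ and e^{γ̂₁} = ȳ₁/ȳ₀, the Manning (1998) correction estimator coincides with e^{γ̂₁} − 1, i.e. PPML in levels is equivalent to the smearing-corrected log-linear estimator with a binary regressor. -/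
open Real

theorem exp_sub_mul_mul_exp_neg_div_mul_exp_neg (p q a b : ℝ) :
    exp (a - b) * (p * exp (-a) / (q * exp (-b))) = p / q := by
  rw [mul_div_mul_comm, mul_left_comm, ← exp_sub, ← exp_add]
  simp

theorem stmt18_general
    (ybar0 ybar1 L0 L1 b1 : ℝ)
    (hb1 : b1 = L1 - L0) :
    Real.exp b1 * ((ybar1 * Real.exp (-L1)) / (ybar0 * Real.exp (-L0))) - 1
      = ybar1 / ybar0 - 1
    ∧ ∀ γ₀ γ₁ : ℝ, Real.exp γ₀ = ybar0 → Real.exp γ₁ = ybar1 / ybar0 →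
        Real.exp b1 * ((ybar1 * Real.exp (-L1)) / (ybar0 * Real.exp (-L0))) - 1
          = Real.exp γ₁ - 1 := by
  rw [hb1, exp_sub_mul_mul_exp_neg_div_mul_exp_neg]
  exact ⟨rfl, fun _ _ _ hγ₁ => by rw [hγ₁]⟩

/-- PPML with a binary regressor equals the smearing-corrected
log-linear estimator. With group means `ȳⱼ`, group log-means `Lⱼ`, OLS slope
`β̂₁ = L₁ − L₀`, the smearing-corrected estimator satisfies
`e^{β̂₁}·(ȳ₁ e^{−L₁})/(ȳ₀ e^{−L₀}) − 1 = ȳ₁/ȳ₀ − 1`; hence for the PPML coefficients,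
which satisfy `e^{γ̂₀} = ȳ₀` and `e^{γ̂₁} = ȳ₁/ȳ₀`, it equals `e^{γ̂₁} − 1`. -/
theorem stmt18 {n : ℕ} (y x : Fin n → ℝ)
    (hy : ∀ i, 0 < y i) (hx : ∀ i, x i = 0 ∨ x i = 1)
    (S0 S1 : Finset (Fin n))
    (hS0 : S0 = Finset.univ.filter (fun i => x i = 0))
    (hS1 : S1 = Finset.univ.filter (fun i => x i = 1))
    (h0 : S0.Nonempty) (h1 : S1.Nonempty)
    (ybar0 ybar1 L0 L1 b1 : ℝ)
    (hyb0 : ybar0 = (∑ i ∈ S0, y i) / (S0.card : ℝ))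
    (hyb1 : ybar1 = (∑ i ∈ S1, y i) / (S1.card : ℝ))
    (hL0 : L0 = (∑ i ∈ S0, Real.log (y i)) / (S0.card : ℝ))
    (hL1 : L1 = (∑ i ∈ S1, Real.log (y i)) / (S1.card : ℝ))
    (hb1 : b1 = L1 - L0) :
    Real.exp b1 * ((ybar1 * Real.exp (-L1)) / (ybar0 * Real.exp (-L0))) - 1
      = ybar1 / ybar0 - 1
    ∧ ∀ γ₀ γ₁ : ℝ, Real.exp γ₀ = ybar0 → Real.exp γ₁ = ybar1 / ybar0 →
        Real.exp b1 * ((ybar1 * Real.exp (-L1)) / (ybar0 * Real.exp (-L0))) - 1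
          = Real.exp γ₁ - 1 :=
  stmt18_general ybar0 ybar1 L0 L1 b1 hb1
end

section
/- Let x be a random variable taking values in {0,1} and let u be a real random variable with E[exp(u) | x] almost surely finite and strictly positive, and let log Y = α₀ + ε₀·x + u for constants α₀, ε₀ ∈ ℝ. Define γ₀ = α₀ + log E[exp(u) | x = 0], γ₁ = ε₀ + log E[exp(u) | x = 1] − log E[exp(u) | x = 0], and η = exp(u) / E[exp(u) | x]. Then almost surely Y = exp(γ₀ + γ₁·x) · η and E[η | x] = 1; that is, with a single binary treatment the log-linear model and the exponential (PPML) model E[Y | x] = exp(γ₀ + γ₁·x) are exactly compatible, with parameters related by the stated mapping. -/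
open MeasureTheory Real ProbabilityTheory

/-!
On `{x = j}` we have `exp u / c x = exp u / c j`, whose conditional mean is `1` by definition
of `c j`. Because `x` only takes the values `0` and `1`, the affine function
`log c 0 + (log c 1 - log c 0) x` equals `log c x` exactly, so `exp (γ₀ + γ₁ x)` is
`exp (α₀ + ε₀ x) · c x` and the factor `c x` cancels against the denominator of `η`.
-/

lemma add_sub_mul_eq_of_eq_zero_or_one {R : Type*} [Ring R] (f : R → R) {t : R}
    (ht : t = 0 ∨ t = 1) : f 0 + (f 1 - f 0) * t = f t := by
  rcases ht with rfl | rfl <;> simp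

lemma integral_cond_preimage_singleton_comp {Ω β E : Type*} [MeasurableSpace Ω]
    [MeasurableSpace β] [MeasurableSingletonClass β] [NormedAddCommGroup E] [NormedSpace ℝ E]
    {μ : Measure Ω} {x : Ω → β} (hx : Measurable x) (f : β → Ω → E) (j : β) :
    ∫ ω, f (x ω) ω ∂μ[|x ⁻¹' {j}] = ∫ ω, f j ω ∂μ[|x ⁻¹' {j}] := by
  refine integral_congr_ae ?_
  filter_upwards [ae_cond_mem (hx (measurableSet_singleton j))] with ω hω
  rw [show x ω = j from hω]

lemma exp_add_log_sub_mul_eq {c : ℝ → ℝ} {t : ℝ} (ht : t = 0 ∨ t = 1) (hct : 0 < c t)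
    (α ε : ℝ) :
    exp (α + log (c 0) + (ε + log (c 1) - log (c 0)) * t) = exp (α + ε * t) * c t := by
  have hlog := add_sub_mul_eq_of_eq_zero_or_one (fun s => log (c s)) ht
  rw [← exp_log hct, ← exp_add, ← hlog]
  ring_nf

theorem stmt19_general
    {Ω : Type*} [MeasurableSpace Ω] (μ : Measure Ω)
    (x u : Ω → ℝ) (hx : Measurable x)
    (hbin : ∀ ω, x ω = 0 ∨ x ω = 1)
    (α₀ ε₀ : ℝ)
    (c : ℝ → ℝ)
    (hc : ∀ j : ℝ, c j = ∫ ω, Real.exp (u ω) ∂(μ[|x ⁻¹' {j}]))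
    (hc0pos : 0 < c 0) (hc1pos : 0 < c 1)
    (γ₀ γ₁ : ℝ)
    (hγ₀ : γ₀ = α₀ + Real.log (c 0))
    (hγ₁ : γ₁ = ε₀ + Real.log (c 1) - Real.log (c 0)) :
    (∀ᵐ ω ∂μ, Real.exp (α₀ + ε₀ * x ω + u ω)
        = Real.exp (γ₀ + γ₁ * x ω) * (Real.exp (u ω) / c (x ω)))
    ∧ (∀ j : ℝ, j = 0 ∨ j = 1 →
        (∫ ω, Real.exp (u ω) / c (x ω) ∂(μ[|x ⁻¹' {j}])) = 1)
    ∧ (∀ j : ℝ, j = 0 ∨ j = 1 →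
        (∫ ω, Real.exp (α₀ + ε₀ * x ω + u ω) ∂(μ[|x ⁻¹' {j}]))
          = Real.exp (γ₀ + γ₁ * j)) := by
  have hcpos : ∀ t : ℝ, t = 0 ∨ t = 1 → 0 < c t := by
    rintro t (rfl | rfl) <;> assumption
  have hexp : ∀ t : ℝ, t = 0 ∨ t = 1 → exp (γ₀ + γ₁ * t) = exp (α₀ + ε₀ * t) * c t :=
    fun t ht => hγ₀ ▸ hγ₁ ▸ exp_add_log_sub_mul_eq ht (hcpos t ht) α₀ ε₀
  have hpt : ∀ ω, exp (α₀ + ε₀ * x ω + u ω) = exp (γ₀ + γ₁ * x ω) * (exp (u ω) / c (x ω)) := by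
    intro ω
    rw [hexp _ (hbin ω), exp_add]
    field_simp [(hcpos _ (hbin ω)).ne']
  have hη : ∀ j : ℝ, j = 0 ∨ j = 1 → ∫ ω, exp (u ω) / c (x ω) ∂μ[|x ⁻¹' {j}] = 1 := by
    intro j hj
    rw [integral_cond_preimage_singleton_comp hx (fun t ω => exp (u ω) / c t), integral_div,
      ← hc j, div_self (hcpos j hj).ne']
  refine ⟨.of_forall hpt, hη, fun j hj => ?_⟩
  simp_rw [hpt]
  rw [integral_cond_preimage_singleton_comp hx
      (fun t ω => exp (γ₀ + γ₁ * t) * (exp (u ω) / c t)), integral_const_mul,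
    ← integral_cond_preimage_singleton_comp hx (fun t ω => exp (u ω) / c t), hη j hj, mul_one]

/-- compatibility of the log-linear and exponential models with a single
binary treatment. Let `x ∈ {0,1}`, `log Y = α₀ + ε₀ x + u`, and let
`c j = E[exp u | x = j]` be finite and strictly positive. With
`γ₀ = α₀ + log (c 0)`, `γ₁ = ε₀ + log (c 1) − log (c 0)`, and `η = exp u / c x`,
almost surely `Y = exp (γ₀ + γ₁ x) · η`, `E[η | x = j] = 1`, and
`E[Y | x = j] = exp (γ₀ + γ₁ j)` for `j ∈ {0,1}`. -/
theorem stmt19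
    {Ω : Type*} [MeasurableSpace Ω] (μ : Measure Ω) [IsProbabilityMeasure μ]
    (x u : Ω → ℝ) (hx : Measurable x) (hu : Measurable u)
    (hbin : ∀ ω, x ω = 0 ∨ x ω = 1)
    (h0 : μ (x ⁻¹' {0}) ≠ 0) (h1 : μ (x ⁻¹' {1}) ≠ 0)
    (hint : Integrable (fun ω => Real.exp (u ω)) μ)
    (α₀ ε₀ : ℝ)
    (c : ℝ → ℝ)
    (hc : ∀ j : ℝ, c j = ∫ ω, Real.exp (u ω) ∂(μ[|x ⁻¹' {j}]))
    (hc0pos : 0 < c 0) (hc1pos : 0 < c 1)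
    (γ₀ γ₁ : ℝ)
    (hγ₀ : γ₀ = α₀ + Real.log (c 0))
    (hγ₁ : γ₁ = ε₀ + Real.log (c 1) - Real.log (c 0)) :
    (∀ᵐ ω ∂μ, Real.exp (α₀ + ε₀ * x ω + u ω)
        = Real.exp (γ₀ + γ₁ * x ω) * (Real.exp (u ω) / c (x ω)))
    ∧ (∀ j : ℝ, j = 0 ∨ j = 1 →
        (∫ ω, Real.exp (u ω) / c (x ω) ∂(μ[|x ⁻¹' {j}])) = 1)
    ∧ (∀ j : ℝ, j = 0 ∨ j = 1 →
        (∫ ω, Real.exp (α₀ + ε₀ * x ω + u ω) ∂(μ[|x ⁻¹' {j}]))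
          = Real.exp (γ₀ + γ₁ * j)) :=
  stmt19_general μ x u hx hbin α₀ ε₀ c hc hc0pos hc1pos γ₀ γ₁ hγ₀ hγ₁
end
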